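/- arXiv:1204.5070 — 10 statements merged into one kernel-verified Lean document; each statement's English description precedes it below -/
import Mathlib

section
/- For every integer n with 1 ≤ n ≤ N−1 the quantities x_n, y_n satisfy the coupled discrete system cN·(x_n + y_n)(x_{n+1} + y_n) = −y_n(N+1+N y_n)(N+1−α+N y_n) and N(N x_n − n)·(x_n + y_n)(x_n + y_{n−1}) = x_n(−N−1+N x_n)(α−N−1+N x_n); the first equation also holds for n = 0, and N x_n − n = a_n²/c > 0 for 1 ≤ n ≤ N. -/
/-!
Write `⟪f, g⟫ = ∑ₖ f(k) g(k) w(k)` and `S_s f = f(· + s)`. Since `⟪S_s p_n, p_n⟫ = 1` and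
`a_n ⟪S_s p_n, p_{n-1}⟫ = n s` are read off from the top two coefficients, the inner products of
shifted and unshifted orthonormal polynomials are all known except
`G_s(n) = a_n a_{n-1} ⟪S_s p_n, p_{n-2}⟫`, whose increments in `n` the three-term recurrence
expresses through `b`. The Pearson equation `(k+1)(k+1-α) w(k+1) = c (N-k) w(k)` allows summation
by parts, `∑ k(k-α) f(k) g(k-1) w(k) = c ∑ (N-k) f(k+1) g(k) w(k)`; taking `(f, g)` to be
`(p_n, p_n)` and `(p_{n+1}, p_n)` gives two Laguerre–Freud equations in `a`, `b` and `G_1`.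
Eliminating `G_1` along `n` yields the first equation of the system as a first integral (by
induction on `n`), and the second then follows algebraically. Positivity of `a_n` is
`a_n = κ_{n-1} / κ_n` for the leading coefficients `κ`.
-/

open Polynomial Finset

theorem Polynomial.degree_sub_smul_lt {K : Type*} [Field K] {f g : K[X]} {m : ℕ}
    (hf : f.natDegree ≤ m) (hg : g.natDegree = m) (hg0 : g ≠ 0) :
    (f - (f.coeff m / g.leadingCoeff) • g).degree < m := by
  have hlc : g.coeff m = g.leadingCoeff := by rw [leadingCoeff, hg]
  rw [degree_lt_iff_coeff_zero]
  intro i hi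
  rcases hi.eq_or_lt with rfl | hi
  · simp [hlc, leadingCoeff_ne_zero.mpr hg0]
  · simp [coeff_eq_zero_of_natDegree_lt (hf.trans_lt hi),
      coeff_eq_zero_of_natDegree_lt (hg.trans_lt hi)]

theorem Polynomial.coeff_taylor_of_natDegree_le {R : Type*} [CommSemiring R] {f : R[X]} {m : ℕ}
    (hf : f.natDegree ≤ m + 1) (s : R) :
    (taylor s f).coeff m = f.coeff m + (m + 1) * s * f.coeff (m + 1) := by
  have hd : (hasseDeriv m f).natDegree < 2 := (natDegree_hasseDeriv_le f m).trans_lt (by omega)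
  rw [taylor_coeff, eval_eq_sum_range' hd, sum_range_succ, sum_range_one, hasseDeriv_coeff,
    hasseDeriv_coeff, zero_add, Nat.choose_self, add_comm 1 m, Nat.choose_succ_self_right]
  push_cast
  ring

theorem Polynomial.natDegree_taylor_sub_le {R : Type*} [CommRing R] {f : R[X]} {m : ℕ}
    (hf : f.natDegree ≤ m + 1) (s : R) : (taylor s f - f).natDegree ≤ m := by
  rw [natDegree_le_iff_coeff_eq_zero]
  intro i hi
  obtain ⟨j, rfl⟩ : ∃ j, i = j + 1 := ⟨i - 1, by omega⟩
  rw [coeff_sub, coeff_taylor_of_natDegree_le (by omega),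
    coeff_eq_zero_of_natDegree_lt (n := j + 2) (by omega)]
  ring

theorem sum_mul_eq_sum_mul_succ_of_pearson {R : Type*} [CommSemiring R] {N : ℕ}
    {φ ψ w q : ℕ → R} (hφ : φ 0 = 0) (hψ : ψ N = 0)
    (h : ∀ k < N, φ (k + 1) * w (k + 1) = ψ k * w k) :
    ∑ k ∈ range (N + 1), φ k * w k * q k = ∑ k ∈ range (N + 1), ψ k * w k * q (k + 1) := by
  rw [sum_range_succ' (fun k => φ k * w k * q k), sum_range_succ, hφ, hψ]
  simp only [zero_mul, add_zero]
  exact sum_congr rfl fun k hk => by rw [h k (mem_range.mp hk)]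

theorem genKrawtchouk_pearson {N k : ℕ} {α c : ℝ} (hα : α < 1) (hk : k < N) :
    ((k : ℝ) + 1) * (k + 1 - α)
        * (N.choose (k + 1) * c ^ (k + 1) / ∏ j ∈ range (k + 1), (1 - α + j))
      = c * (N - k) * (N.choose k * c ^ k / ∏ j ∈ range k, (1 - α + j)) := by
  have hprod : ∏ j ∈ range k, (1 - α + (j : ℝ)) ≠ 0 :=
    prod_ne_zero_iff.mpr fun j _ => by positivity
  have hchoose : (N.choose (k + 1) : ℝ) * (k + 1) = N.choose k * (N - k) := by
    have := congrArg (Nat.cast (R := ℝ)) (Nat.choose_succ_right_eq N k)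
    push_cast [Nat.cast_sub hk.le] at this
    exact this
  have hk1 : 1 - α + (k : ℝ) ≠ 0 := by positivity
  rw [prod_range_succ]
  field_simp
  linear_combination ((k + 1 - α) * c ^ (k + 1)) * hchoose

noncomputable section

def discreteInner (N : ℕ) (w : ℕ → ℝ) : LinearMap.BilinForm ℝ ℝ[X] :=
  LinearMap.mk₂ ℝ (fun f g => ∑ k ∈ range (N + 1), f.eval (k : ℝ) * g.eval (k : ℝ) * w k)
    (fun _ _ _ => by simp only [eval_add, add_mul, sum_add_distrib])
    (fun _ _ _ => by simp only [eval_smul, smul_eq_mul, mul_sum, mul_assoc])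
    (fun _ _ _ => by simp only [eval_add, mul_add, add_mul, sum_add_distrib])
    (fun _ _ _ => by
      simp only [eval_smul, smul_eq_mul, mul_sum]; exact sum_congr rfl fun _ _ => by ring)

variable {N : ℕ} {w : ℕ → ℝ}

local notation "⟪" f ", " g "⟫" => discreteInner N w f g

theorem discreteInner_apply (f g : ℝ[X]) :
    ⟪f, g⟫ = ∑ k ∈ range (N + 1), f.eval (k : ℝ) * g.eval (k : ℝ) * w k := rfl

namespace discreteInner

theorem congr {f g f' g' : ℝ[X]} (h : ∀ x, f.eval x * g.eval x = f'.eval x * g'.eval x) :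
    ⟪f, g⟫ = ⟪f', g'⟫ := by
  simp only [discreteInner_apply, h]

theorem comm (f g : ℝ[X]) : ⟪f, g⟫ = ⟪g, f⟫ :=
  congr fun _ => mul_comm _ _

theorem X_mul_left (f g : ℝ[X]) : ⟪X * f, g⟫ = ⟪f, X * g⟫ :=
  congr fun _ => by simp only [eval_mul, eval_X]; ring

theorem summation_by_parts {α c : ℝ}
    (hpearson : ∀ k < N, ((k : ℝ) + 1) * (k + 1 - α) * w (k + 1) = c * (N - k) * w k)
    (f g : ℝ[X]) :
    ⟪X * f, taylor (-1) (X * g)⟫ + (1 - α) * ⟪X * f, taylor (-1) g⟫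
      = c * (N * ⟪taylor 1 f, g⟫ - ⟪taylor 1 f, X * g⟫) := by
  have := sum_mul_eq_sum_mul_succ_of_pearson (N := N) (w := w)
    (φ := fun k => (k : ℝ) * (k - α)) (ψ := fun k => c * (N - k))
    (q := fun k => f.eval (k : ℝ) * g.eval ((k : ℝ) - 1)) (by simp) (by simp)
    (fun k hk => by push_cast; linear_combination hpearson k hk)
  simp only [discreteInner_apply, taylor_eval, eval_mul, eval_X, mul_sum, ← sum_add_distrib,
    ← sum_sub_distrib]
  convert this using 1 <;> refine sum_congr rfl fun k _ => ?_ <;>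
    simp only [sub_eq_add_neg, Nat.cast_succ, add_neg_cancel_right] <;> ring

end discreteInner

/-- `a 0 = 0` stands for `p (-1) = 0`; note that `p (0 - 1)` is `p 0` in Lean. -/
structure OrthonormalSystem (N : ℕ) (w : ℕ → ℝ) (p : ℕ → ℝ[X]) (a b : ℕ → ℝ) : Prop where
  natDegree_eq : ∀ n ≤ N, (p n).natDegree = n
  leadingCoeff_pos : ∀ n ≤ N, 0 < (p n).leadingCoeff
  inner_eq : ∀ m ≤ N, ∀ n ≤ N, discreteInner N w (p m) (p n) = if m = n then 1 else 0
  a_zero : a 0 = 0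
  a_eq : ∀ n, 1 ≤ n → n ≤ N → a n = discreteInner N w (X * p n) (p (n - 1))
  b_eq : ∀ n ≤ N, b n = discreteInner N w (X * p n) (p n)

def shiftCoeff (N : ℕ) (w : ℕ → ℝ) (p : ℕ → ℝ[X]) (a : ℕ → ℝ) (s : ℝ) (m : ℕ) : ℝ :=
  a m * a (m - 1) * discreteInner N w (taylor s (p m)) (p (m - 2))

namespace OrthonormalSystem

variable {p : ℕ → ℝ[X]} {a b : ℕ → ℝ} {f : ℝ[X]} {m n : ℕ}
variable (hp : OrthonormalSystem N w p a b)
include hp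

theorem ne_zero (hn : n ≤ N) : p n ≠ 0 :=
  leadingCoeff_ne_zero.mp (hp.leadingCoeff_pos n hn).ne'

theorem coeff_eq_leadingCoeff (hn : n ≤ N) : (p n).coeff n = (p n).leadingCoeff := by
  rw [leadingCoeff, hp.natDegree_eq n hn]

theorem inner_self (hn : n ≤ N) : ⟪p n, p n⟫ = 1 := by
  simp [hp.inner_eq n hn n hn]

theorem inner_of_ne (hm : m ≤ N) (hn : n ≤ N) (h : m ≠ n) : ⟪p m, p n⟫ = 0 := by
  simp [hp.inner_eq m hm n hn, h]

theorem inner_eq_zero_of_degree_lt (hf : f.degree < n) (hn : n ≤ N) : ⟪f, p n⟫ = 0 := by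
  suffices ∀ d : ℕ, ∀ f : ℝ[X], f.degree < d → d ≤ n → ⟪f, p n⟫ = 0 from this n f hf le_rfl
  intro d
  induction d with
  | zero => intro f hf _; simp [degree_eq_bot.mp (Nat.WithBot.lt_zero_iff.mp hf)]
  | succ d ih =>
    intro f hf hd
    have hdN : d ≤ N := by omega
    set γ := f.coeff d / (p d).leadingCoeff
    calc ⟪f, p n⟫ = ⟪f - γ • p d, p n⟫ + γ * ⟪p d, p n⟫ := by
          simp only [map_sub, map_smul, LinearMap.sub_apply, LinearMap.smul_apply, smul_eq_mul]
          ring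
      _ = 0 := by
        rw [ih _ (degree_sub_smul_lt (natDegree_le_of_degree_le (Order.le_of_lt_succ hf))
          (hp.natDegree_eq d hdN) (hp.ne_zero hdN)) (by omega), hp.inner_of_ne hdN hn (by omega)]
        ring

theorem inner_eq_coeff_div (hf : f.natDegree ≤ n) (hn : n ≤ N) :
    ⟪f, p n⟫ = f.coeff n / (p n).leadingCoeff := by
  set γ := f.coeff n / (p n).leadingCoeff
  calc ⟪f, p n⟫ = ⟪f - γ • p n, p n⟫ + γ * ⟪p n, p n⟫ := by
        simp only [map_sub, map_smul, LinearMap.sub_apply, LinearMap.smul_apply, smul_eq_mul]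
        ring
    _ = γ := by
      rw [hp.inner_eq_zero_of_degree_lt (degree_sub_smul_lt hf (hp.natDegree_eq n hn)
        (hp.ne_zero hn)) hn, hp.inner_self hn]
      ring

theorem eq_zero_of_inner_eq_zero (hf : f.natDegree ≤ N) (h : ∀ m ≤ N, ⟪f, p m⟫ = 0) :
    f = 0 := by
  by_contra hf0
  have := hp.inner_eq_coeff_div le_rfl hf
  rw [h _ hf, coeff_natDegree, eq_comm, div_eq_zero_iff] at this
  exact this.elim (leadingCoeff_ne_zero.mpr hf0) (hp.leadingCoeff_pos _ hf).ne'

theorem a_mul_leadingCoeff (hn : n + 1 ≤ N) :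
    a (n + 1) * (p (n + 1)).leadingCoeff = (p n).leadingCoeff := by
  have hdeg : (X * p n).natDegree ≤ n + 1 := by
    rw [natDegree_X_mul (hp.ne_zero (by omega)), hp.natDegree_eq n (by omega)]
  rw [hp.a_eq (n + 1) (by omega) hn, Nat.add_sub_cancel, discreteInner.comm,
    ← discreteInner.X_mul_left, hp.inner_eq_coeff_div hdeg hn, coeff_X_mul,
    hp.coeff_eq_leadingCoeff (by omega), div_mul_cancel₀ _ (hp.leadingCoeff_pos _ hn).ne']

theorem a_pos (h1 : 1 ≤ n) (hn : n ≤ N) : 0 < a n := by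
  obtain ⟨n, rfl⟩ : ∃ k, n = k + 1 := ⟨n - 1, by omega⟩
  have := hp.a_mul_leadingCoeff hn
  exact pos_of_mul_pos_left (this ▸ hp.leadingCoeff_pos n (by omega))
    (hp.leadingCoeff_pos _ hn).le


theorem inner_X_mul_eq_zero_of_lt (h : n + 1 < m) (hm : m ≤ N) : ⟪X * p n, p m⟫ = 0 := by
  refine hp.inner_eq_zero_of_degree_lt (degree_le_natDegree.trans_lt ?_) hm
  rw [natDegree_X_mul (hp.ne_zero (by omega)), hp.natDegree_eq n (by omega)]
  exact_mod_cast h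

theorem inner_X_mul_pred (hn : n + 1 ≤ N) : ⟪X * p (n + 1), p n⟫ = a (n + 1) := by
  rw [hp.a_eq (n + 1) (by omega) hn, Nat.add_sub_cancel]

theorem inner_X_mul_succ (hn : n + 1 ≤ N) : ⟪X * p n, p (n + 1)⟫ = a (n + 1) := by
  rw [discreteInner.X_mul_left, discreteInner.comm, hp.inner_X_mul_pred hn]

theorem X_mul_eq (hn : n + 1 ≤ N) :
    X * p n = a (n + 1) • p (n + 1) + b n • p n + a n • p (n - 1) := by
  have hdeg : ∀ (r : ℝ), ∀ j ≤ n + 1, (r • p j).natDegree ≤ n + 1 := fun r j hj =>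
    (natDegree_smul_le _ _).trans ((hp.natDegree_eq j (by omega)).le.trans hj)
  rw [← sub_eq_zero]
  refine hp.eq_zero_of_inner_eq_zero ?_ fun j hj => ?_
  · refine (natDegree_sub_le_of_le (m := n + 1) (n := n + 1) ?_ (natDegree_add_le_of_degree_le
      (natDegree_add_le_of_degree_le (hdeg _ _ le_rfl) (hdeg _ n (by omega)))
      (hdeg _ (n - 1) (by omega)))).trans (by omega)
    rw [natDegree_X_mul (hp.ne_zero (by omega)), hp.natDegree_eq n (by omega)]
  simp only [map_sub, map_add, map_smul, LinearMap.sub_apply, LinearMap.add_apply,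
    LinearMap.smul_apply, smul_eq_mul]
  obtain h | rfl | rfl | rfl | h : j + 1 < n ∨ j + 1 = n ∨ j = n ∨ j = n + 1 ∨ n + 1 < j := by
    omega
  · rw [discreteInner.X_mul_left, discreteInner.comm,
      hp.inner_X_mul_eq_zero_of_lt h (by omega), hp.inner_of_ne (by omega) hj (by omega),
      hp.inner_of_ne (by omega) hj (by omega), hp.inner_of_ne (by omega) hj (by omega)]
    ring
  · rw [Nat.add_sub_cancel, hp.inner_X_mul_pred (by omega), hp.inner_self hj,
      hp.inner_of_ne (by omega) hj (by omega), hp.inner_of_ne (by omega) hj (by omega)]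
    ring
  · rw [← hp.b_eq _ hj, hp.inner_self hj, hp.inner_of_ne (by omega) hj (by omega)]
    rcases Nat.eq_zero_or_pos j with rfl | hj0
    · rw [hp.a_zero]; ring
    · rw [hp.inner_of_ne (by omega) hj (by omega)]; ring
  · rw [hp.inner_X_mul_succ hj, hp.inner_self hj, hp.inner_of_ne (by omega) hj (by omega),
      hp.inner_of_ne (by omega) hj (by omega)]
    ring
  · rw [hp.inner_X_mul_eq_zero_of_lt h hj, hp.inner_of_ne (by omega) hj (by omega),
      hp.inner_of_ne (by omega) hj (by omega), hp.inner_of_ne (by omega) hj (by omega)]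
    ring

theorem coeff_taylor_self (s : ℝ) (hn : n ≤ N) :
    (taylor s (p n)).coeff n = (p n).leadingCoeff := by
  simpa only [hp.natDegree_eq n hn] using coeff_taylor_natDegree (r := s) (f := p n)

theorem inner_taylor_self (s : ℝ) (hn : n ≤ N) : ⟪taylor s (p n), p n⟫ = 1 := by
  rw [hp.inner_eq_coeff_div (by rw [natDegree_taylor, hp.natDegree_eq n hn]) hn,
    hp.coeff_taylor_self s hn, div_self (hp.leadingCoeff_pos n hn).ne']

theorem inner_taylor_eq_zero_of_lt (s : ℝ) (h : m < n) (hn : n ≤ N) :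
    ⟪taylor s (p m), p n⟫ = 0 := by
  refine hp.inner_eq_zero_of_degree_lt (degree_le_natDegree.trans_lt ?_) hn
  rw [natDegree_taylor, hp.natDegree_eq m (by omega)]
  exact_mod_cast h

theorem coeff_taylor_sub_self (s : ℝ) (hn : n + 1 ≤ N) :
    (taylor s (p (n + 1)) - p (n + 1)).coeff n = (n + 1) * s * (p (n + 1)).leadingCoeff := by
  rw [coeff_sub, coeff_taylor_of_natDegree_le (hp.natDegree_eq _ hn).le,
    hp.coeff_eq_leadingCoeff hn]
  ring

theorem natDegree_taylor_sub_self_le (s : ℝ) (hn : n + 1 ≤ N) :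
    (taylor s (p (n + 1)) - p (n + 1)).natDegree ≤ n :=
  natDegree_taylor_sub_le (hp.natDegree_eq _ hn).le s

theorem a_mul_inner_taylor_pred (s : ℝ) (hn : n ≤ N) :
    a n * ⟪taylor s (p n), p (n - 1)⟫ = n * s := by
  rcases n with _ | n
  · simp [hp.a_zero]
  rw [Nat.add_sub_cancel]
  push_cast
  calc a (n + 1) * ⟪taylor s (p (n + 1)), p n⟫
      = a (n + 1) * (⟪taylor s (p (n + 1)) - p (n + 1), p n⟫ + ⟪p (n + 1), p n⟫) := by
        simp only [map_sub, LinearMap.sub_apply, sub_add_cancel]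
    _ = (n + 1) * s := by
      rw [hp.inner_eq_coeff_div (hp.natDegree_taylor_sub_self_le s hn) (by omega),
        hp.coeff_taylor_sub_self s hn, hp.inner_of_ne hn (by omega) (by omega), add_zero]
      field_simp [(hp.leadingCoeff_pos n (by omega)).ne']
      linear_combination s * hp.a_mul_leadingCoeff hn

theorem a_mul_inner_taylor_pred_eq_zero (s : ℝ) (hn : n ≤ N) :
    a n * ⟪taylor s (p (n - 1)), p n⟫ = 0 := by
  rcases Nat.eq_zero_or_pos n with rfl | hn0
  · rw [hp.a_zero, zero_mul]
  · rw [hp.inner_taylor_eq_zero_of_lt s (by omega) hn, mul_zero]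

theorem inner_X_mul_taylor_self (s : ℝ) (hn : n + 1 ≤ N) :
    ⟪X * p (n + 1), taylor s (p (n + 1))⟫ = b (n + 1) + (n + 1) * s := by
  have hdeg : (X * (taylor s (p (n + 1)) - p (n + 1))).natDegree ≤ n + 1 :=
    natDegree_mul_le.trans (by rw [natDegree_X]; linarith [hp.natDegree_taylor_sub_self_le s hn])
  calc ⟪X * p (n + 1), taylor s (p (n + 1))⟫
      = ⟪X * p (n + 1), p (n + 1)⟫ + ⟪X * (taylor s (p (n + 1)) - p (n + 1)), p (n + 1)⟫ := by
        rw [discreteInner.comm (X * _), ← discreteInner.X_mul_left, ← LinearMap.add_apply,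
          ← map_add, mul_sub, add_sub_cancel]
    _ = b (n + 1) + (n + 1) * s := by
      rw [← hp.b_eq _ hn, hp.inner_eq_coeff_div hdeg hn, coeff_X_mul,
        hp.coeff_taylor_sub_self s hn, mul_div_assoc, div_self (hp.leadingCoeff_pos _ hn).ne',
        mul_one]

theorem inner_X_mul_taylor_pred (s : ℝ) (hn : n + 1 ≤ N) :
    ⟪X * p (n + 1), taylor s (p n)⟫ = a (n + 1) := by
  have hdeg : (X * taylor s (p n)).natDegree ≤ n + 1 :=
    natDegree_mul_le.trans <| by
      rw [natDegree_X, natDegree_taylor, hp.natDegree_eq n (by omega)]; omega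
  rw [discreteInner.X_mul_left, discreteInner.comm, hp.inner_eq_coeff_div hdeg hn, coeff_X_mul,
    hp.coeff_taylor_self s (by omega), ← hp.a_mul_leadingCoeff hn,
    mul_div_assoc, div_self (hp.leadingCoeff_pos _ hn).ne', mul_one]

theorem inner_X_mul_taylor_eq_zero_of_lt (s : ℝ) (h : m + 1 < n) (hn : n ≤ N) :
    ⟪X * p n, taylor s (p m)⟫ = 0 := by
  rw [discreteInner.X_mul_left, discreteInner.comm]
  refine hp.inner_eq_zero_of_degree_lt (degree_le_natDegree.trans_lt ?_) hn
  have := natDegree_mul_le (p := (X : ℝ[X])) (q := taylor s (p m))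
  rw [natDegree_X, natDegree_taylor, hp.natDegree_eq m (by omega)] at this
  exact_mod_cast (by omega : (X * taylor s (p m)).natDegree < n)

theorem shiftCoeff_add_two (s : ℝ) (hm : m + 2 ≤ N) :
    shiftCoeff N w p a s (m + 2)
      = shiftCoeff N w p a s (m + 1) + (m + 1) * s * (s + b m - b (m + 1)) := by
  have key : ⟪taylor s (X * p (m + 1)), p m⟫
      = ⟪taylor s (p (m + 1)), X * p m⟫ + s * ⟪taylor s (p (m + 1)), p m⟫ := by
    rw [taylor_mul, taylor_X, discreteInner.congr (g' := (X + C s) * p m) fun x => by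
      simp only [eval_mul, eval_add, eval_X, eval_C]; ring]
    simp only [add_mul, map_add, C_mul', map_smul, smul_eq_mul]
  rw [hp.X_mul_eq hm, hp.X_mul_eq (n := m) (by omega)] at key
  simp only [map_add, map_smul, LinearMap.add_apply, LinearMap.smul_apply, smul_eq_mul,
    Nat.add_sub_cancel] at key
  rw [hp.inner_taylor_self s (n := m) (by omega), hp.inner_taylor_self s (n := m + 1) (by omega)]
    at key
  have hE := hp.a_mul_inner_taylor_pred s (n := m + 1) (by omega)
  simp only [shiftCoeff, Nat.add_sub_cancel, show m + 2 - 1 = m + 1 by omega,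
    show m + 1 - 2 = m - 1 by omega]
  push_cast at hE ⊢
  linear_combination a (m + 1) * key + (b m + s - b (m + 1)) * hE

theorem shiftCoeff_add_shiftCoeff_neg (s : ℝ) (hm : m ≤ N) :
    shiftCoeff N w p a s m + shiftCoeff N w p a (-s) m = m * (m - 1) * s ^ 2 := by
  induction m with
  | zero => simp [shiftCoeff, hp.a_zero]
  | succ m ih =>
    rcases m with _ | m
    · simp [shiftCoeff, hp.a_zero]
    have ih := ih (by omega)
    rw [hp.shiftCoeff_add_two s hm, hp.shiftCoeff_add_two (-s) hm]
    push_cast at ih ⊢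
    linear_combination ih

section LaguerreFreud

variable {α c : ℝ}
  (hpearson : ∀ k < N, ((k : ℝ) + 1) * (k + 1 - α) * w (k + 1) = c * (N - k) * w k)
include hpearson

theorem laguerreFreud_diag (hn : n + 1 ≤ N) :
    a (n + 1) ^ 2 + a n ^ 2 + b n ^ 2 - (2 * n + α) * b n + (α - 1) * n + n * (n + 1)
      - shiftCoeff N w p a 1 (n + 1) = c * (N - b n - n) := by
  have key := discreteInner.summation_by_parts hpearson (p n) (p n)
  rw [hp.X_mul_eq hn] at key
  simp only [map_add, map_smul, LinearMap.add_apply, LinearMap.smul_apply, smul_eq_mul,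
    discreteInner.comm (p _) (taylor _ _)] at key
  rw [hp.inner_taylor_self (-1) hn, hp.inner_taylor_self (-1) (n := n) (by omega),
    hp.inner_taylor_self (-1) (n := n - 1) (by omega), hp.inner_taylor_self 1 (n := n) (by omega),
    hp.inner_taylor_eq_zero_of_lt (-1) (m := n) (by omega) hn,
    hp.inner_taylor_eq_zero_of_lt (-1) (m := n - 1) (by omega) hn,
    hp.inner_taylor_eq_zero_of_lt 1 (m := n) (by omega) hn] at key
  have hup := hp.a_mul_inner_taylor_pred 1 (n := n) (by omega)
  have hdown := hp.a_mul_inner_taylor_pred (-1) (n := n) (by omega)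
  have hdown' := hp.a_mul_inner_taylor_pred (-1) hn
  have hzero := hp.a_mul_inner_taylor_pred_eq_zero (-1) (n := n) (by omega)
  have hG := hp.shiftCoeff_add_shiftCoeff_neg 1 hn
  simp only [shiftCoeff, Nat.add_sub_cancel, show n + 1 - 2 = n - 1 by omega] at hG ⊢
  push_cast at hdown' hG
  linear_combination key - b n * hdown' - hG - (b n + 1 - α) * hdown - b n * hzero - c * hup

theorem laguerreFreud_offDiag (hn : n + 1 ≤ N) :
    a (n + 1) ^ 2 * (b (n + 1) + b n - n - α)
      = c * ((n + 1) * (N - b n) - a (n + 1) ^ 2 - shiftCoeff N w p a 1 (n + 1)) := by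
  have key := discreteInner.summation_by_parts hpearson (p (n + 1)) (p n)
  rw [hp.X_mul_eq hn] at key
  simp only [map_add, map_smul, smul_eq_mul] at key
  rw [hp.inner_X_mul_taylor_self (-1) hn, hp.inner_X_mul_taylor_pred (-1) hn,
    hp.inner_taylor_self 1 hn] at key
  have hzero : a n * ⟪X * p (n + 1), taylor (-1) (p (n - 1))⟫ = 0 := by
    rcases Nat.eq_zero_or_pos n with rfl | hn0
    · rw [hp.a_zero, zero_mul]
    · rw [hp.inner_X_mul_taylor_eq_zero_of_lt (-1) (by omega) hn, mul_zero]
  have hup := hp.a_mul_inner_taylor_pred 1 hn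
  simp only [shiftCoeff, Nat.add_sub_cancel, show n + 1 - 2 = n - 1 by omega] at hup ⊢
  push_cast at key hup
  linear_combination a (n + 1) * key - a (n + 1) * hzero + (c * (N - b n)) * hup

theorem discrete_system_first (hn : n + 1 ≤ N) :
    (a n ^ 2 + c * (2 * n + α - b n - N - 1 - c))
        * (a (n + 1) ^ 2 + c * (2 * n + α - b n - N - c))
      = c * (b n + N + 1 + c - n - α) * (b n + c - n - α) * (b n + c - n) := by
  induction n with
  | zero =>
    have h := hp.laguerreFreud_diag hpearson hn
    simp only [shiftCoeff, hp.a_zero] at h ⊢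
    push_cast at h ⊢
    linear_combination (-c * (1 + c - α + N + b 0)) * h
  | succ m ih =>
    have hdiag := hp.laguerreFreud_diag hpearson (n := m) (by omega)
    have hoff := hp.laguerreFreud_offDiag hpearson (n := m) (by omega)
    have hG := hp.shiftCoeff_add_two 1 hn
    have hdiag' := hp.laguerreFreud_diag hpearson hn
    push_cast at hG hdiag' ⊢
    linear_combination ih (by omega)
      + (c * (2 + c - α + N - 2 * (m + 1) + b m) - a (m + 1) ^ 2) * hdiag
      + (1 + b m - b (m + 1)) * hoff
      + (a (m + 1) ^ 2 - c * (1 + c - α + N - 2 * (m + 1) + b (m + 1))) * (hG + hdiag')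

theorem discrete_system_second (hn : n + 1 ≤ N) :
    a (n + 1) ^ 2 * (a (n + 1) ^ 2 + c * (2 * n + 1 + α - b (n + 1) - N - c))
        * (a (n + 1) ^ 2 + c * (2 * n + α - b n - N - c))
      = (a (n + 1) ^ 2 + c * (n + 1)) * (a (n + 1) ^ 2 + c * (n - N))
        * (a (n + 1) ^ 2 + c * (n + α - N)) := by
  linear_combination c ^ 2 * hp.discrete_system_first hpearson hn
    + c ^ 2 * (c * (2 + c - α + N - 2 * (n + 1) + b n) - a (n + 1) ^ 2)
      * hp.laguerreFreud_diag hpearson hn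
    + c * (c * (2 + c - α + N - 2 * (n + 1) + b n) - a (n + 1) ^ 2)
      * hp.laguerreFreud_offDiag hpearson hn

end LaguerreFreud

end OrthonormalSystem

end

theorem generalized_krawtchouk_discrete_system_general
    (N : ℕ) (α c : ℝ) (hα : α < 1) (hc : 0 < c)
    (w : ℕ → ℝ)
    (hw : ∀ k, k ≤ N →
      w k = (N.choose k : ℝ) * c ^ k / ∏ j ∈ Finset.range k, (1 - α + (j : ℝ)))
    (p : ℕ → Polynomial ℝ)
    (hdeg : ∀ n, n ≤ N → (p n).natDegree = n)
    (hlead : ∀ n, n ≤ N → 0 < (p n).leadingCoeff)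
    (horth : ∀ m, m ≤ N → ∀ n, n ≤ N →
      ∑ k ∈ Finset.range (N + 1), (p m).eval (k : ℝ) * (p n).eval (k : ℝ) * w k
        = if m = n then 1 else 0)
    (a b : ℕ → ℝ)
    (ha0 : a 0 = 0)
    (ha : ∀ n, 1 ≤ n → n ≤ N →
      a n = ∑ k ∈ Finset.range (N + 1),
        (k : ℝ) * (p n).eval (k : ℝ) * (p (n - 1)).eval (k : ℝ) * w k)
    (hb : ∀ n, n ≤ N →
      b n = ∑ k ∈ Finset.range (N + 1), (k : ℝ) * ((p n).eval (k : ℝ)) ^ 2 * w k)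
    (x y : ℕ → ℝ)
    (hx : ∀ n, x n = ((a n) ^ 2 / c + (n : ℝ)) / N)
    (hy : ∀ n, y n = -(b n + (N : ℝ) + 1 + c - (n : ℝ) - α) / N) :
    (∀ n : ℕ, n + 1 ≤ N →
      c * (N : ℝ) * ((x n + y n) * (x (n + 1) + y n))
        = -(y n * ((N : ℝ) + 1 + (N : ℝ) * y n) * ((N : ℝ) + 1 - α + (N : ℝ) * y n))) ∧
    (∀ n : ℕ, 1 ≤ n → n + 1 ≤ N →
      (N : ℝ) * ((N : ℝ) * x n - (n : ℝ)) * ((x n + y n) * (x n + y (n - 1)))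
        = x n * (-(N : ℝ) - 1 + (N : ℝ) * x n) * (α - (N : ℝ) - 1 + (N : ℝ) * x n)) ∧
    (∀ n : ℕ, 1 ≤ n → n ≤ N →
      (N : ℝ) * x n - (n : ℝ) = (a n) ^ 2 / c ∧ 0 < (a n) ^ 2 / c) := by
  have hp : OrthonormalSystem N w p a b :=
    { natDegree_eq := hdeg, leadingCoeff_pos := hlead, inner_eq := horth, a_zero := ha0
      a_eq := fun n h1 hn => (ha n h1 hn).trans <| sum_congr rfl fun k _ => by
        rw [eval_mul, eval_X]
      b_eq := fun n hn => (hb n hn).trans <| sum_congr rfl fun k _ => by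
        rw [eval_mul, eval_X]; ring }
  have hpearson : ∀ k < N, ((k : ℝ) + 1) * (k + 1 - α) * w (k + 1) = c * (N - k) * w k :=
    fun k hk => by rw [hw (k + 1) hk, hw k hk.le]; exact genKrawtchouk_pearson hα hk
  refine ⟨fun n hn => ?_, fun n h1 hn => ?_, fun n h1 hn => ?_⟩ <;>
    have hN : (N : ℝ) ≠ 0 := Nat.cast_ne_zero.mpr (by omega)
  · rw [hx, hx, hy]
    field_simp
    push_cast
    linear_combination hp.discrete_system_first hpearson hn
  · obtain ⟨m, rfl⟩ : ∃ m, n = m + 1 := ⟨n - 1, by omega⟩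
    rw [hx, hy, hy, Nat.add_sub_cancel]
    field_simp
    push_cast
    linear_combination hp.discrete_system_second hpearson (n := m) (by omega)
  · exact ⟨by rw [hx]; field_simp; ring, div_pos (pow_pos (hp.a_pos h1 hn) 2) hc⟩

/-- Theorem 1 (discrete system for the recurrence coefficients of the
generalized Krawtchouk weight `w(k) = C(N,k) c^k / (1-α)_k`). -/
theorem generalized_krawtchouk_discrete_system
    (N : ℕ) (hN : 1 ≤ N) (α c : ℝ) (hα : α < 1) (hc : 0 < c)
    (w : ℕ → ℝ)
    (hw : ∀ k, k ≤ N →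
      w k = (N.choose k : ℝ) * c ^ k / ∏ j ∈ Finset.range k, (1 - α + (j : ℝ)))
    (p : ℕ → Polynomial ℝ)
    (hdeg : ∀ n, n ≤ N → (p n).natDegree = n)
    (hlead : ∀ n, n ≤ N → 0 < (p n).leadingCoeff)
    (horth : ∀ m, m ≤ N → ∀ n, n ≤ N →
      ∑ k ∈ Finset.range (N + 1), (p m).eval (k : ℝ) * (p n).eval (k : ℝ) * w k
        = if m = n then 1 else 0)
    (a b : ℕ → ℝ)
    (ha0 : a 0 = 0)
    (ha : ∀ n, 1 ≤ n → n ≤ N →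
      a n = ∑ k ∈ Finset.range (N + 1),
        (k : ℝ) * (p n).eval (k : ℝ) * (p (n - 1)).eval (k : ℝ) * w k)
    (hb : ∀ n, n ≤ N →
      b n = ∑ k ∈ Finset.range (N + 1), (k : ℝ) * ((p n).eval (k : ℝ)) ^ 2 * w k)
    (x y : ℕ → ℝ)
    (hx : ∀ n, x n = ((a n) ^ 2 / c + (n : ℝ)) / N)
    (hy : ∀ n, y n = -(b n + (N : ℝ) + 1 + c - (n : ℝ) - α) / N) :
    (∀ n : ℕ, n + 1 ≤ N →
      c * (N : ℝ) * ((x n + y n) * (x (n + 1) + y n))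
        = -(y n * ((N : ℝ) + 1 + (N : ℝ) * y n) * ((N : ℝ) + 1 - α + (N : ℝ) * y n))) ∧
    (∀ n : ℕ, 1 ≤ n → n + 1 ≤ N →
      (N : ℝ) * ((N : ℝ) * x n - (n : ℝ)) * ((x n + y n) * (x n + y (n - 1)))
        = x n * (-(N : ℝ) - 1 + (N : ℝ) * x n) * (α - (N : ℝ) - 1 + (N : ℝ) * x n)) ∧
    (∀ n : ℕ, 1 ≤ n → n ≤ N →
      (N : ℝ) * x n - (n : ℝ) = (a n) ^ 2 / c ∧ 0 < (a n) ^ 2 / c) :=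
  generalized_krawtchouk_discrete_system_general N α c hα hc w hw p hdeg hlead horth a b ha0 ha hb x
    y hx hy
end

section
/- The initial values of the sequences x_n, y_n are x_0 = 0 and y_0 = −(N+1+c−α)/N − (c/(1−α))·M(−N+1, 2−α, −c)/M(−N, 1−α, −c), where M(−N, 1−α, −c) = Σ_{s=0}^{N} C(N,s)·c^s/(1−α)_s and M(−N+1, 2−α, −c) = Σ_{s=0}^{N−1} C(N−1,s)·c^s/(2−α)_s are the terminating Kummer confluent hypergeometric sums. -/
/-!
The polynomial `p₀` is a constant `d` with `d² Σ w = 1`, so `b₀ = Σ k w(k) / Σ w(k)` is the mean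
of the weight. Since `k C(N,k) = N C(N-1,k-1)` and `(a)_k = a (a+1)_{k-1}`, the first moment
`Σ k w(k)` is `N (c/a) M(-N+1, a+1, -c)`, while `Σ w(k) = M(-N, a, -c)`.
-/

open Finset Polynomial

/-- `C(N,k) c^k / (a)_k`; the paper's weight is the case `a = 1 - α`. -/
noncomputable def krawtchoukWeight (N : ℕ) (a c : ℝ) (k : ℕ) : ℝ :=
  (N.choose k : ℝ) * c ^ k / ∏ j ∈ range k, (a + (j : ℝ))

lemma prod_range_succ_add_cast (a : ℝ) (s : ℕ) :
    ∏ j ∈ range (s + 1), (a + (j : ℝ)) = a * ∏ j ∈ range s, (a + 1 + (j : ℝ)) := by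
  rw [prod_range_succ', mul_comm]
  push_cast
  simp only [add_zero, add_assoc, add_comm (1 : ℝ)]

lemma succ_mul_krawtchoukWeight_succ (n : ℕ) (a c : ℝ) (k : ℕ) :
    ((k + 1 : ℕ) : ℝ) * krawtchoukWeight (n + 1) a c (k + 1)
      = (n + 1) * (c / a) * krawtchoukWeight n (a + 1) c k := by
  have hchoose : ((k : ℝ) + 1) * ((n + 1).choose (k + 1) : ℝ) = (n + 1) * (n.choose k : ℝ) := by
    rw [mul_comm]
    exact_mod_cast (Nat.add_one_mul_choose_eq n k).symm
  simp only [krawtchoukWeight, prod_range_succ_add_cast, div_eq_mul_inv, mul_inv, pow_succ]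
  push_cast
  linear_combination c ^ k * c * a⁻¹ * (∏ j ∈ range k, (a + 1 + (j : ℝ)))⁻¹ * hchoose

lemma sum_mul_krawtchoukWeight (n : ℕ) (a c : ℝ) :
    ∑ k ∈ range (n + 1 + 1), (k : ℝ) * krawtchoukWeight (n + 1) a c k
      = (n + 1) * (c / a) * ∑ k ∈ range (n + 1), krawtchoukWeight n (a + 1) c k := by
  rw [sum_range_succ', mul_sum]
  simp only [succ_mul_krawtchoukWeight_succ, Nat.cast_zero, zero_mul, add_zero]

lemma sum_mul_eval_sq_eq_div_of_natDegree_eq_zero {ι : Type*} (s : Finset ι) (f w : ι → ℝ)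
    {q : ℝ[X]} (hq : q.natDegree = 0)
    (hnorm : ∑ i ∈ s, q.eval (f i) * q.eval (f i) * w i = 1) :
    ∑ i ∈ s, f i * q.eval (f i) ^ 2 * w i = (∑ i ∈ s, f i * w i) / ∑ i ∈ s, w i := by
  obtain ⟨d, rfl⟩ := natDegree_eq_zero.mp hq
  simp only [eval_C] at hnorm ⊢
  rw [← mul_sum] at hnorm
  have hmass : ∑ i ∈ s, w i ≠ 0 := right_ne_zero_of_mul_eq_one hnorm
  have hmoment : ∑ i ∈ s, f i * d ^ 2 * w i = d * d * ∑ i ∈ s, f i * w i := by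
    rw [mul_sum]
    exact sum_congr rfl fun i _ ↦ by ring
  rw [eq_div_iff hmass, hmoment]
  linear_combination (∑ i ∈ s, f i * w i) * hnorm

theorem generalized_krawtchouk_initial_values_general
    (N : ℕ) (hN : 1 ≤ N) (α c : ℝ)
    (w : ℕ → ℝ)
    (hw : ∀ k, k ≤ N →
      w k = (N.choose k : ℝ) * c ^ k / ∏ j ∈ Finset.range k, (1 - α + (j : ℝ)))
    (p : ℕ → Polynomial ℝ)
    (hdeg : ∀ n, n ≤ N → (p n).natDegree = n)
    (horth : ∀ m, m ≤ N → ∀ n, n ≤ N →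
      ∑ k ∈ Finset.range (N + 1), (p m).eval (k : ℝ) * (p n).eval (k : ℝ) * w k
        = if m = n then 1 else 0)
    (a b : ℕ → ℝ)
    (ha0 : a 0 = 0)
    (hb : ∀ n, n ≤ N →
      b n = ∑ k ∈ Finset.range (N + 1), (k : ℝ) * ((p n).eval (k : ℝ)) ^ 2 * w k)
    (x y : ℕ → ℝ)
    (hx : ∀ n, x n = ((a n) ^ 2 / c + (n : ℝ)) / N)
    (hy : ∀ n, y n = -(b n + (N : ℝ) + 1 + c - (n : ℝ) - α) / N) :
    x 0 = 0 ∧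
    y 0 = -((N : ℝ) + 1 + c - α) / N
      - (c / (1 - α)) *
        (∑ s ∈ Finset.range N,
          ((N - 1).choose s : ℝ) * c ^ s / ∏ j ∈ Finset.range s, (2 - α + (j : ℝ)))
        / (∑ s ∈ Finset.range (N + 1),
          (N.choose s : ℝ) * c ^ s / ∏ j ∈ Finset.range s, (1 - α + (j : ℝ))) := by
  refine ⟨by simp [hx, ha0], ?_⟩
  obtain ⟨n, rfl⟩ : ∃ n, N = n + 1 := ⟨N - 1, by omega⟩
  have hw' : ∀ k ∈ range (n + 1 + 1), w k = krawtchoukWeight (n + 1) (1 - α) c k :=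
    fun k hk ↦ hw k (Nat.lt_succ_iff.mp (mem_range.mp hk))
  have hb0 : b 0 / (n + 1 : ℕ)
      = c / (1 - α) * (∑ k ∈ range (n + 1), krawtchoukWeight n (2 - α) c k)
        / ∑ k ∈ range (n + 1 + 1), krawtchoukWeight (n + 1) (1 - α) c k := by
    rw [hb 0 (Nat.zero_le _),
      sum_mul_eval_sq_eq_div_of_natDegree_eq_zero _ _ _ (hdeg 0 (Nat.zero_le _))
        (by simpa using horth 0 (Nat.zero_le _) 0 (Nat.zero_le _)),
      sum_congr rfl hw', sum_congr rfl fun k hk ↦ congrArg _ (hw' k hk),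
      sum_mul_krawtchoukWeight, show (1 : ℝ) - α + 1 = 2 - α by ring]
    push_cast
    field_simp
  unfold krawtchoukWeight at hb0
  rw [hy, Nat.add_sub_cancel, ← hb0]
  ring

/-- The initial values `x₀ = 0` and
`y₀ = -(N+1+c-α)/N - (c/(1-α)) · M(-N+1, 2-α, -c)/M(-N, 1-α, -c)`
for the discrete system of the generalized Krawtchouk weight, where the
terminating Kummer functions are written as finite sums. -/
theorem generalized_krawtchouk_initial_values
    (N : ℕ) (hN : 1 ≤ N) (α c : ℝ) (hα : α < 1) (hc : 0 < c)
    (w : ℕ → ℝ)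
    (hw : ∀ k, k ≤ N →
      w k = (N.choose k : ℝ) * c ^ k / ∏ j ∈ Finset.range k, (1 - α + (j : ℝ)))
    (p : ℕ → Polynomial ℝ)
    (hdeg : ∀ n, n ≤ N → (p n).natDegree = n)
    (hlead : ∀ n, n ≤ N → 0 < (p n).leadingCoeff)
    (horth : ∀ m, m ≤ N → ∀ n, n ≤ N →
      ∑ k ∈ Finset.range (N + 1), (p m).eval (k : ℝ) * (p n).eval (k : ℝ) * w k
        = if m = n then 1 else 0)
    (a b : ℕ → ℝ)
    (ha0 : a 0 = 0)
    (ha : ∀ n, 1 ≤ n → n ≤ N →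
      a n = ∑ k ∈ Finset.range (N + 1),
        (k : ℝ) * (p n).eval (k : ℝ) * (p (n - 1)).eval (k : ℝ) * w k)
    (hb : ∀ n, n ≤ N →
      b n = ∑ k ∈ Finset.range (N + 1), (k : ℝ) * ((p n).eval (k : ℝ)) ^ 2 * w k)
    (x y : ℕ → ℝ)
    (hx : ∀ n, x n = ((a n) ^ 2 / c + (n : ℝ)) / N)
    (hy : ∀ n, y n = -(b n + (N : ℝ) + 1 + c - (n : ℝ) - α) / N) :
    x 0 = 0 ∧
    y 0 = -((N : ℝ) + 1 + c - α) / N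
      - (c / (1 - α)) *
        (∑ s ∈ Finset.range N,
          ((N - 1).choose s : ℝ) * c ^ s / ∏ j ∈ Finset.range s, (2 - α + (j : ℝ)))
        / (∑ s ∈ Finset.range (N + 1),
          (N.choose s : ℝ) * c ^ s / ∏ j ∈ Finset.range s, (1 - α + (j : ℝ))) :=
  generalized_krawtchouk_initial_values_general N hN α c w hw p hdeg horth a b ha0 hb x y hx hy
end

section
/- Suppose that for all real x ≠ N the identity t_n/(N−x) + t_{n+1}/(N−x) = (x−b_n)·(x/(c(N−x)) + T_n/(N−x)) − u(x+1) + Σ_{j=0}^{n} (x/(c(N−x)) + T_j/(N−x)) holds, where u(x) = −1 + x(x−α)/(c(N+1−x)). Then c(t_n + t_{n+1} + b_n T_n) = −1 + α + cN + c·Σ_{j=0}^{n} T_j and c·T_n − b_n − 1 + α − c + n = 0. -/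
/-!
Multiplying the relation by `c (N - x)` turns it into an identity between a constant and
a polynomial in `x`; the `x²` terms cancel, so the polynomial is affine. An affine function
that is constant off a single point has zero slope, and its intercept is that constant:
the intercept gives the first equation and the slope the second.
-/

theorem eq_zero_and_eq_of_forall_ne_mul_add_eq {K : Type*} [Field K] [CharZero K] {p a k d : K}
    (h : ∀ x, x ≠ p → a * x + k = d) : a = 0 ∧ k = d := by
  have h₁ := h (p + 1) (by simp)
  have h₂ := h (p + 2) (by simp)
  have ha : a = 0 := by linear_combination h₂ - h₁
  exact ⟨ha, by simpa [ha] using h₁⟩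

theorem first_compatibility_affine {N α c b tn tn1 : ℝ} {n : ℕ} {T : ℕ → ℝ} (hc : c ≠ 0)
    {x : ℝ} (hx : x ≠ N)
    (h : tn / (N - x) + tn1 / (N - x)
        = (x - b) * (x / (c * (N - x)) + T n / (N - x))
          - (-1 + (x + 1) * ((x + 1) - α) / (c * (N + 1 - (x + 1))))
          + ∑ j ∈ Finset.range (n + 1), (x / (c * (N - x)) + T j / (N - x))) :
    (c * T n - b - 1 + α - c + n) * x
        + (-1 + α + c * N + c * ∑ j ∈ Finset.range (n + 1), T j - c * b * T n)
      = c * (tn + tn1) := by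
  have hd : N - x ≠ 0 := sub_ne_zero.mpr hx.symm
  rw [Finset.sum_add_distrib, Finset.sum_const, Finset.card_range, nsmul_eq_mul,
    ← Finset.sum_div, show N + 1 - (x + 1) = N - x by ring] at h
  field_simp at h
  push_cast at h
  linear_combination -h

theorem first_compatibility_consequences_general
    (N : ℕ) (α c : ℝ) (hc : c ≠ 0) (n : ℕ)
    (b tn tn1 : ℝ) (T : ℕ → ℝ)
    (h : ∀ x : ℝ, x ≠ (N : ℝ) →
      tn / ((N : ℝ) - x) + tn1 / ((N : ℝ) - x)
        = (x - b) * (x / (c * ((N : ℝ) - x)) + T n / ((N : ℝ) - x))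
          - (-1 + (x + 1) * ((x + 1) - α) / (c * ((N : ℝ) + 1 - (x + 1))))
          + ∑ j ∈ Finset.range (n + 1),
              (x / (c * ((N : ℝ) - x)) + T j / ((N : ℝ) - x))) :
    c * (tn + tn1 + b * T n)
      = -1 + α + c * (N : ℝ) + c * ∑ j ∈ Finset.range (n + 1), T j ∧
    c * T n - b - 1 + α - c + (n : ℝ) = 0 := by
  obtain ⟨hslope, hintercept⟩ :=
    eq_zero_and_eq_of_forall_ne_mul_add_eq fun x hx => first_compatibility_affine hc hx (h x hx)
  exact ⟨by linear_combination -hintercept, hslope⟩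

/-- Consequences of the first compatibility relation of the ladder operators
for the generalized Krawtchouk weight. -/
theorem first_compatibility_consequences
    (N : ℕ) (hN : 1 ≤ N) (α c : ℝ) (hc : c ≠ 0) (n : ℕ)
    (b tn tn1 : ℝ) (T : ℕ → ℝ)
    (h : ∀ x : ℝ, x ≠ (N : ℝ) →
      tn / ((N : ℝ) - x) + tn1 / ((N : ℝ) - x)
        = (x - b) * (x / (c * ((N : ℝ) - x)) + T n / ((N : ℝ) - x))
          - (-1 + (x + 1) * ((x + 1) - α) / (c * ((N : ℝ) + 1 - (x + 1))))
          + ∑ j ∈ Finset.range (n + 1),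
              (x / (c * ((N : ℝ) - x)) + T j / ((N : ℝ) - x))) :
    c * (tn + tn1 + b * T n)
      = -1 + α + c * (N : ℝ) + c * ∑ j ∈ Finset.range (n + 1), T j ∧
    c * T n - b - 1 + α - c + (n : ℝ) = 0 :=
  first_compatibility_consequences_general N α c hc n b tn tn1 T h
end

section
/- Under hypotheses (i)–(iii), for all n ≥ 0 one has c(t_n − n)(T_n + T_{n−1}) + t_n(α + n − c − 2) = nN − c·Σ_{j=0}^{n−1} T_j. -/
/-!
The difference `Φ n` of the two sides of the identity (`compatibilityDefect`) vanishes at `n = 0`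
because `t 0 = 0`, and relation (iii) at `n` plus `t (n + 1) - t n` times relation (ii) at `n` is
exactly `Φ (n + 1) - Φ n = 0`.
-/

noncomputable def compatibilityDefect (N : ℕ) (α c : ℝ) (t : ℕ → ℝ) (T : ℤ → ℝ) (n : ℕ) : ℝ :=
  c * (t n - (n : ℝ)) * (T (n : ℤ) + T ((n : ℤ) - 1)) + t n * (α + (n : ℝ) - c - 2)
    - ((n : ℝ) * (N : ℝ) - c * ∑ j ∈ Finset.range n, T (j : ℤ))

lemma compatibilityDefect_zero (N : ℕ) (α c : ℝ) {t : ℕ → ℝ} (T : ℤ → ℝ) (ht0 : t 0 = 0) :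
    compatibilityDefect N α c t T 0 = 0 := by
  simp [compatibilityDefect, ht0]

lemma compatibilityDefect_succ {N : ℕ} {α c : ℝ} {t : ℕ → ℝ} {T : ℤ → ℝ} {n : ℕ} {b : ℝ}
    (h2 : c * T (n : ℤ) - b - 1 + α - c + (n : ℝ) = 0)
    (h3 : c * (t (n + 1) - ((n : ℝ) + 1)) * T ((n : ℤ) + 1)
        - c * (t n - (n : ℝ)) * T ((n : ℤ) - 1)
      = -b * t (n + 1) + (b - 1) * t n + (N : ℝ)) :
    compatibilityDefect N α c t T (n + 1) = compatibilityDefect N α c t T n := by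
  simp only [compatibilityDefect, Nat.cast_succ, add_sub_cancel_right, Finset.sum_range_succ]
  linear_combination h3 + (t (n + 1) - t n) * h2

theorem compatibility_eq_9_general
    (N : ℕ) (α c : ℝ)
    (t b : ℕ → ℝ) (T : ℤ → ℝ) (ht0 : t 0 = 0)
    (h2 : ∀ n : ℕ, c * T (n : ℤ) - b n - 1 + α - c + (n : ℝ) = 0)
    (h3 : ∀ n : ℕ,
      c * (t (n + 1) - ((n : ℝ) + 1)) * T ((n : ℤ) + 1)
        - c * (t n - (n : ℝ)) * T ((n : ℤ) - 1)
      = -(b n) * t (n + 1) + (b n - 1) * t n + (N : ℝ)) :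
    ∀ n : ℕ, c * (t n - (n : ℝ)) * (T (n : ℤ) + T ((n : ℤ) - 1))
      + t n * (α + (n : ℝ) - c - 2)
      = (n : ℝ) * (N : ℝ) - c * ∑ j ∈ Finset.range n, T (j : ℤ) := by
  intro n
  have hdefect : compatibilityDefect N α c t T n = 0 := by
    induction n with
    | zero => exact compatibilityDefect_zero N α c T ht0
    | succ n ih => rw [compatibilityDefect_succ (h2 n) (h3 n), ih]
  exact sub_eq_zero.mp hdefect

/-- Consequence of the compatibility relations (equation (4.2.3) in the paper). -/
theorem compatibility_eq_9
    (N : ℕ) (hN : 1 ≤ N) (α c : ℝ) (hc : c ≠ 0)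
    (t b : ℕ → ℝ) (T : ℤ → ℝ) (ht0 : t 0 = 0) (hTm1 : T (-1) = 0)
    (h1 : ∀ n : ℕ, c * (t n + t (n + 1) + b n * T (n : ℤ))
      = -1 + α + c * (N : ℝ) + c * ∑ j ∈ Finset.range (n + 1), T (j : ℤ))
    (h2 : ∀ n : ℕ, c * T (n : ℤ) - b n - 1 + α - c + (n : ℝ) = 0)
    (h3 : ∀ n : ℕ,
      c * (t (n + 1) - ((n : ℝ) + 1)) * T ((n : ℤ) + 1)
        - c * (t n - (n : ℝ)) * T ((n : ℤ) - 1)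
      = -(b n) * t (n + 1) + (b n - 1) * t n + (N : ℝ)) :
    ∀ n : ℕ, c * (t n - (n : ℝ)) * (T (n : ℤ) + T ((n : ℤ) - 1))
      + t n * (α + (n : ℝ) - c - 2)
      = (n : ℝ) * (N : ℝ) - c * ∑ j ∈ Finset.range n, T (j : ℤ) :=
  compatibility_eq_9_general N α c t b T ht0 h2 h3
end

section
/- Under hypotheses (i)–(iii), for all n ≥ 0 one has (N + c·T_n)·(1 − α − cN + c·t_{n+1} + c·T_n(α − c − 2 + c·T_n)) + c·t_n(N − t_{n+1} + c·T_n) = 0. -/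
/-!
Relation (iii) says that `U n = c (t n - n) T (n - 1)` has an explicit first difference. Summing it
and using (i) to eliminate the partial sums `∑ T j` expresses `U n` in closed form through `t n`,
`t (n + 1)` and `T n` alone. The left-hand side of the theorem vanishes at `n = 0` because `t 0 = 0`,
and the closed form at `n + 1`, together with (i) differenced and (ii), shows that its increments vanish.
-/

namespace Compatibility

variable {N : ℕ} {α c : ℝ} {t b : ℕ → ℝ} {T : ℤ → ℝ}

lemma sum_relation_succ_sub
    (h1 : ∀ n : ℕ, c * (t n + t (n + 1) + b n * T (n : ℤ))
      = -1 + α + c * (N : ℝ) + c * ∑ j ∈ Finset.range (n + 1), T (j : ℤ)) (n : ℕ) :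
    c * (t (n + 2) - t n + b (n + 1) * T ((n : ℤ) + 1) - b n * T (n : ℤ)) = c * T ((n : ℤ) + 1) := by
  have h := h1 (n + 1)
  rw [Finset.sum_range_succ] at h
  push_cast at h
  linear_combination h - h1 n

lemma T_pred_closed_form (ht0 : t 0 = 0) (hTm1 : T (-1) = 0)
    (h1 : ∀ n : ℕ, c * (t n + t (n + 1) + b n * T (n : ℤ))
      = -1 + α + c * (N : ℝ) + c * ∑ j ∈ Finset.range (n + 1), T (j : ℤ))
    (h2 : ∀ n : ℕ, c * T (n : ℤ) - b n - 1 + α - c + (n : ℝ) = 0)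
    (h3 : ∀ n : ℕ,
      c * (t (n + 1) - ((n : ℝ) + 1)) * T ((n : ℤ) + 1)
        - c * (t n - (n : ℝ)) * T ((n : ℤ) - 1)
      = -(b n) * t (n + 1) + (b n - 1) * t n + (N : ℝ)) (m : ℕ) :
    c * (t m - m) * T ((m : ℤ) - 1)
      = -1 + α + c * N + c * T (m : ℤ) * (2 - α + c - c * T (m : ℤ)) - c * t (m + 1)
        + t m * (2 - α - c * T (m : ℤ)) + m * (N - t m) := by
  induction m with
  | zero =>
    have h10 := h1 0
    have h20 := h2 0
    simp only [Finset.sum_range_one, Nat.cast_zero, zero_sub, zero_add, ht0] at h10 h20 ⊢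
    rw [hTm1]
    linear_combination h10 + c * T 0 * h20
  | succ k ih =>
    have hk := h3 k
    have hD := sum_relation_succ_sub h1 k
    have h2k := h2 k
    have h2k' := h2 (k + 1)
    push_cast at hk h2k' ⊢
    rw [add_sub_cancel_right]
    linear_combination hk + ih + hD + (t (k + 1) - t k - c * T (k : ℤ)) * h2k
      + c * T ((k : ℤ) + 1) * h2k'

end Compatibility

open Compatibility in
theorem compatibility_eq_10_general
    (N : ℕ) (α c : ℝ)
    (t b : ℕ → ℝ) (T : ℤ → ℝ) (ht0 : t 0 = 0) (hTm1 : T (-1) = 0)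
    (h1 : ∀ n : ℕ, c * (t n + t (n + 1) + b n * T (n : ℤ))
      = -1 + α + c * (N : ℝ) + c * ∑ j ∈ Finset.range (n + 1), T (j : ℤ))
    (h2 : ∀ n : ℕ, c * T (n : ℤ) - b n - 1 + α - c + (n : ℝ) = 0)
    (h3 : ∀ n : ℕ,
      c * (t (n + 1) - ((n : ℝ) + 1)) * T ((n : ℤ) + 1)
        - c * (t n - (n : ℝ)) * T ((n : ℤ) - 1)
      = -(b n) * t (n + 1) + (b n - 1) * t n + (N : ℝ)) :
    ∀ n : ℕ, ((N : ℝ) + c * T (n : ℤ))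
      * (1 - α - c * (N : ℝ) + c * t (n + 1) + c * T (n : ℤ) * (α - c - 2 + c * T (n : ℤ)))
      + c * t n * ((N : ℝ) - t (n + 1) + c * T (n : ℤ)) = 0 := by
  intro n
  induction n with
  | zero =>
    have h10 := h1 0
    have h20 := h2 0
    simp only [Finset.sum_range_one, Nat.cast_zero, zero_add, ht0] at h10 h20 ⊢
    linear_combination (N + c * T 0) * h10 + c * T 0 * (N + c * T 0) * h20
  | succ k ih =>
    have hR := T_pred_closed_form ht0 hTm1 h1 h2 h3 (k + 1)
    have h2k' := h2 (k + 1)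
    push_cast at hR h2k' ⊢
    rw [add_sub_cancel_right] at hR
    linear_combination ih + c * (T ((k : ℤ) + 1) - T k) * hR
      + (N + c * T k - t (k + 1)) * sum_relation_succ_sub h1 k
      - c * T k * (N - t (k + 1) + c * T k) * h2 k
      + c * T ((k : ℤ) + 1) * (N + c * T k - t (k + 1)) * h2k'

/-- Consequence of the compatibility relations (equation (4.2.4) in the paper). -/
theorem compatibility_eq_10
    (N : ℕ) (hN : 1 ≤ N) (α c : ℝ) (hc : c ≠ 0)
    (t b : ℕ → ℝ) (T : ℤ → ℝ) (ht0 : t 0 = 0) (hTm1 : T (-1) = 0)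
    (h1 : ∀ n : ℕ, c * (t n + t (n + 1) + b n * T (n : ℤ))
      = -1 + α + c * (N : ℝ) + c * ∑ j ∈ Finset.range (n + 1), T (j : ℤ))
    (h2 : ∀ n : ℕ, c * T (n : ℤ) - b n - 1 + α - c + (n : ℝ) = 0)
    (h3 : ∀ n : ℕ,
      c * (t (n + 1) - ((n : ℝ) + 1)) * T ((n : ℤ) + 1)
        - c * (t n - (n : ℝ)) * T ((n : ℤ) - 1)
      = -(b n) * t (n + 1) + (b n - 1) * t n + (N : ℝ)) :
    ∀ n : ℕ, ((N : ℝ) + c * T (n : ℤ))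
      * (1 - α - c * (N : ℝ) + c * t (n + 1) + c * T (n : ℤ) * (α - c - 2 + c * T (n : ℤ)))
      + c * t n * ((N : ℝ) - t (n + 1) + c * T (n : ℤ)) = 0 :=
  compatibility_eq_10_general N α c t b T ht0 hTm1 h1 h2 h3
end

section
/- Under hypotheses (i)–(iii), for all n ≥ 0 one has t_n·(1 − 2n + (2n − 2 + α)(N+1) + c(n+N)·T_n + c(n+N+c·T_n)·T_{n−1}) = n·(N + c·T_{n−1})(N + c·T_n) + t_n²·(n − 2 + α + c(T_n + T_{n−1})). -/
/-!
Let `E n` be the difference of the two sides. After `b n` is eliminated by (ii), the relation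
(iii) at `n`, multiplied by `N + c T n - t (n + 1)`, shows that `E (n + 1) - E n` is
`t n - t (n + 1)` times the quantity `I n` of `compatibility_firstIntegral`. This `I` is a first
integral: subtracting consecutive instances of (i) removes the partial sums `∑ T j`, and with
(ii) and (iii) this gives `I (n + 1) = I n`. Both `E 0` and `I 0` vanish since `t 0 = 0` and
`T (-1) = 0`.
-/

section Compatibility

variable {N : ℕ} {α c : ℝ} {t b : ℕ → ℝ} {T : ℤ → ℝ}

theorem compatibility_succ_sub_self
    (h1 : ∀ n : ℕ, c * (t n + t (n + 1) + b n * T (n : ℤ))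
      = -1 + α + c * (N : ℝ) + c * ∑ j ∈ Finset.range (n + 1), T (j : ℤ)) (n : ℕ) :
    c * (t (n + 2) - t n + b (n + 1) * T ((n : ℤ) + 1) - b n * T (n : ℤ))
      = c * T ((n : ℤ) + 1) := by
  have h := h1 (n + 1)
  rw [Finset.sum_range_succ] at h
  push_cast at h
  linear_combination h - h1 n

theorem compatibility_firstIntegral (ht0 : t 0 = 0) (hTm1 : T (-1) = 0)
    (h1 : ∀ n : ℕ, c * (t n + t (n + 1) + b n * T (n : ℤ))
      = -1 + α + c * (N : ℝ) + c * ∑ j ∈ Finset.range (n + 1), T (j : ℤ))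
    (h2 : ∀ n : ℕ, c * T (n : ℤ) - b n - 1 + α - c + (n : ℝ) = 0)
    (h3 : ∀ n : ℕ,
      c * (t (n + 1) - ((n : ℝ) + 1)) * T ((n : ℤ) + 1)
        - c * (t n - (n : ℝ)) * T ((n : ℤ) - 1)
      = -(b n) * t (n + 1) + (b n - 1) * t n + (N : ℝ)) (n : ℕ) :
    c * t (n + 1) + ((n : ℝ) + α - 2) * t n
      + c * t n * (T (n : ℤ) + T ((n : ℤ) - 1)) - c * (n : ℝ) * T ((n : ℤ) - 1)
      + c ^ 2 * T (n : ℤ) ^ 2 + c * (α - 2 - c) * T (n : ℤ)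
      - (n : ℝ) * (N : ℝ) + 1 - α - c * (N : ℝ) = 0 := by
  induction n with
  | zero =>
    have h := h1 0
    rw [Finset.sum_range_one] at h
    push_cast at h ⊢
    rw [hTm1, ht0]
    linear_combination h + c * T 0 * h2 0 - c * ht0
  | succ n ih =>
    have h2' := h2 (n + 1)
    push_cast at h2' ⊢
    rw [add_sub_cancel_right]
    linear_combination ih + compatibility_succ_sub_self h1 n + h3 n
      + (t (n + 1) - t n - c * T (n : ℤ)) * h2 n + c * T ((n : ℤ) + 1) * h2'

end Compatibility

theorem compatibility_eq_11_general
    (N : ℕ) (α c : ℝ)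
    (t b : ℕ → ℝ) (T : ℤ → ℝ) (ht0 : t 0 = 0) (hTm1 : T (-1) = 0)
    (h1 : ∀ n : ℕ, c * (t n + t (n + 1) + b n * T (n : ℤ))
      = -1 + α + c * (N : ℝ) + c * ∑ j ∈ Finset.range (n + 1), T (j : ℤ))
    (h2 : ∀ n : ℕ, c * T (n : ℤ) - b n - 1 + α - c + (n : ℝ) = 0)
    (h3 : ∀ n : ℕ,
      c * (t (n + 1) - ((n : ℝ) + 1)) * T ((n : ℤ) + 1)
        - c * (t n - (n : ℝ)) * T ((n : ℤ) - 1)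
      = -(b n) * t (n + 1) + (b n - 1) * t n + (N : ℝ)) :
    ∀ n : ℕ, t n * (1 - 2 * (n : ℝ) + (2 * (n : ℝ) - 2 + α) * ((N : ℝ) + 1)
        + c * ((n : ℝ) + (N : ℝ)) * T (n : ℤ)
        + c * ((n : ℝ) + (N : ℝ) + c * T (n : ℤ)) * T ((n : ℤ) - 1))
      = (n : ℝ) * ((N : ℝ) + c * T ((n : ℤ) - 1)) * ((N : ℝ) + c * T (n : ℤ))
        + (t n) ^ 2 * ((n : ℝ) - 2 + α + c * (T (n : ℤ) + T ((n : ℤ) - 1))) := by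
  intro n
  induction n with
  | zero => simp [ht0]
  | succ n ih =>
    have hI := compatibility_firstIntegral ht0 hTm1 h1 h2 h3 n
    push_cast
    rw [add_sub_cancel_right]
    linear_combination ih + ((N : ℝ) + c * T (n : ℤ) - t (n + 1)) * h3 n
      + (t (n + 1) - t n) * ((N : ℝ) + c * T (n : ℤ) - t (n + 1)) * h2 n
      + (t n - t (n + 1)) * hI

/-- Consequence of the compatibility relations (equation (4.2.5) in the paper). -/
theorem compatibility_eq_11
    (N : ℕ) (hN : 1 ≤ N) (α c : ℝ) (hc : c ≠ 0)
    (t b : ℕ → ℝ) (T : ℤ → ℝ) (ht0 : t 0 = 0) (hTm1 : T (-1) = 0)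
    (h1 : ∀ n : ℕ, c * (t n + t (n + 1) + b n * T (n : ℤ))
      = -1 + α + c * (N : ℝ) + c * ∑ j ∈ Finset.range (n + 1), T (j : ℤ))
    (h2 : ∀ n : ℕ, c * T (n : ℤ) - b n - 1 + α - c + (n : ℝ) = 0)
    (h3 : ∀ n : ℕ,
      c * (t (n + 1) - ((n : ℝ) + 1)) * T ((n : ℤ) + 1)
        - c * (t n - (n : ℝ)) * T ((n : ℤ) - 1)
      = -(b n) * t (n + 1) + (b n - 1) * t n + (N : ℝ)) :
    ∀ n : ℕ, t n * (1 - 2 * (n : ℝ) + (2 * (n : ℝ) - 2 + α) * ((N : ℝ) + 1)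
        + c * ((n : ℝ) + (N : ℝ)) * T (n : ℤ)
        + c * ((n : ℝ) + (N : ℝ) + c * T (n : ℤ)) * T ((n : ℤ) - 1))
      = (n : ℝ) * ((N : ℝ) + c * T ((n : ℤ) - 1)) * ((N : ℝ) + c * T (n : ℤ))
        + (t n) ^ 2 * ((n : ℝ) - 2 + α + c * (T (n : ℤ) + T ((n : ℤ) - 1))) :=
  compatibility_eq_11_general N α c t b T ht0 hTm1 h1 h2 h3
end

section
/- Suppose the real numbers t_n, t_{n+1}, T_{n−1}, T_n satisfy (N + c·T_n)·(1 − α − cN + c·t_{n+1} + c·T_n(α − c − 2 + c·T_n)) + c·t_n(N − t_{n+1} + c·T_n) = 0 and t_n·(1 − 2n + (2n − 2 + α)(N+1) + c(n+N)·T_n + c(n+N+c·T_n)·T_{n−1}) = n·(N + c·T_{n−1})(N + c·T_n) + t_n²·(n − 2 + α + c(T_n + T_{n−1})). Then the quantities x_n = t_n/N, x_{n+1} = t_{n+1}/N, y_{n−1} = −c·T_{n−1}/N − 1, y_n = −c·T_n/N − 1 satisfy cN·(x_n + y_n)(x_{n+1} + y_n) = −y_n(N+1+N y_n)(N+1−α+N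 y_n) and N(N x_n − n)·(x_n + y_n)(x_n + y_{n−1}) = x_n(−N−1+N x_n)(α−N−1+N x_n). -/
/-!
Both equations involve `T` only through `cT`. Under `t = N x`, `cT = -N (y + 1)` each of them
becomes `N` times (up to sign) the corresponding equation of the discrete system, so clearing the
denominator `N` is all that is needed.
-/

section SubstitutionIdentities

variable {K : Type*} [Field K]

theorem discrete_eq_one_of_substitution {N α c x x₁ y t t₁ u : K} (hN : N ≠ 0)
    (hx : x = t / N) (hx₁ : x₁ = t₁ / N) (hy : y = -u / N - 1)
    (h : (N + u) * (1 - α - c * N + c * t₁ + u * (α - c - 2 + u)) + c * t * (N - t₁ + u) = 0) :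
    c * N * ((x + y) * (x₁ + y)) = -(y * (N + 1 + N * y) * (N + 1 - α + N * y)) := by
  subst hx hx₁ hy
  field_simp
  linear_combination -h

theorem discrete_eq_two_of_substitution {N α n x y y' t u v : K} (hN : N ≠ 0)
    (hx : x = t / N) (hy : y = -u / N - 1) (hy' : y' = -v / N - 1)
    (h : t * (1 - 2 * n + (2 * n - 2 + α) * (N + 1) + (n + N) * u + (n + N + u) * v)
      = n * (N + v) * (N + u) + t ^ 2 * (n - 2 + α + (u + v))) :
    N * (N * x - n) * ((x + y) * (x + y'))
      = x * (-N - 1 + N * x) * (α - N - 1 + N * x) := by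
  subst hx hy hy'
  field_simp
  linear_combination h

end SubstitutionIdentities

theorem substitution_gives_discrete_system_general
    (N : ℕ) (hN : 1 ≤ N) (α c : ℝ) (n : ℕ)
    (tn tn1 Tnm1 Tn : ℝ)
    (h1 : ((N : ℝ) + c * Tn)
        * (1 - α - c * (N : ℝ) + c * tn1 + c * Tn * (α - c - 2 + c * Tn))
      + c * tn * ((N : ℝ) - tn1 + c * Tn) = 0)
    (h2 : tn * (1 - 2 * (n : ℝ) + (2 * (n : ℝ) - 2 + α) * ((N : ℝ) + 1)
        + c * ((n : ℝ) + (N : ℝ)) * Tn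
        + c * ((n : ℝ) + (N : ℝ) + c * Tn) * Tnm1)
      = (n : ℝ) * ((N : ℝ) + c * Tnm1) * ((N : ℝ) + c * Tn)
        + tn ^ 2 * ((n : ℝ) - 2 + α + c * (Tn + Tnm1)))
    (xn xn1 ynm1 yn : ℝ)
    (hxn : xn = tn / N) (hxn1 : xn1 = tn1 / N)
    (hynm1 : ynm1 = -(c * Tnm1) / N - 1) (hyn : yn = -(c * Tn) / N - 1) :
    c * (N : ℝ) * ((xn + yn) * (xn1 + yn))
      = -(yn * ((N : ℝ) + 1 + (N : ℝ) * yn) * ((N : ℝ) + 1 - α + (N : ℝ) * yn)) ∧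
    (N : ℝ) * ((N : ℝ) * xn - (n : ℝ)) * ((xn + yn) * (xn + ynm1))
      = xn * (-(N : ℝ) - 1 + (N : ℝ) * xn) * (α - (N : ℝ) - 1 + (N : ℝ) * xn) := by
  have hN₀ : (N : ℝ) ≠ 0 := Nat.cast_ne_zero.mpr (by omega)
  refine ⟨discrete_eq_one_of_substitution hN₀ hxn hxn1 hyn h1,
    discrete_eq_two_of_substitution hN₀ hxn hyn hynm1 ?_⟩
  linear_combination h2

/-- The substitution `xₙ = tₙ/N`, `yₙ = -cTₙ/N - 1` turns equations (4.2.11)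
and (4.2.12) into the discrete system (gen system). -/
theorem substitution_gives_discrete_system
    (N : ℕ) (hN : 1 ≤ N) (α c : ℝ) (hc : c ≠ 0) (n : ℕ)
    (tn tn1 Tnm1 Tn : ℝ)
    (h1 : ((N : ℝ) + c * Tn)
        * (1 - α - c * (N : ℝ) + c * tn1 + c * Tn * (α - c - 2 + c * Tn))
      + c * tn * ((N : ℝ) - tn1 + c * Tn) = 0)
    (h2 : tn * (1 - 2 * (n : ℝ) + (2 * (n : ℝ) - 2 + α) * ((N : ℝ) + 1)
        + c * ((n : ℝ) + (N : ℝ)) * Tn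
        + c * ((n : ℝ) + (N : ℝ) + c * Tn) * Tnm1)
      = (n : ℝ) * ((N : ℝ) + c * Tnm1) * ((N : ℝ) + c * Tn)
        + tn ^ 2 * ((n : ℝ) - 2 + α + c * (Tn + Tnm1)))
    (xn xn1 ynm1 yn : ℝ)
    (hxn : xn = tn / N) (hxn1 : xn1 = tn1 / N)
    (hynm1 : ynm1 = -(c * Tnm1) / N - 1) (hyn : yn = -(c * Tn) / N - 1) :
    c * (N : ℝ) * ((xn + yn) * (xn1 + yn))
      = -(yn * ((N : ℝ) + 1 + (N : ℝ) * yn) * ((N : ℝ) + 1 - α + (N : ℝ) * yn)) ∧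
    (N : ℝ) * ((N : ℝ) * xn - (n : ℝ)) * ((xn + yn) * (xn + ynm1))
      = xn * (-(N : ℝ) - 1 + (N : ℝ) * xn) * (α - (N : ℝ) - 1 + (N : ℝ) * xn) :=
  substitution_gives_discrete_system_general N hN α c n tn tn1 Tnm1 Tn h1 h2 xn xn1 ynm1 yn hxn hxn1
    hynm1 hyn
end

section
/- As ε → 0⁺ the α-dP_IV data degenerate to the generalized Krawtchouk system: with X_n = x_n − 1/ε, Y_n = y_n + 1/ε, Ã = 1/ε, B̃ = −3/ε + (2N+2−α)/N, C̃ = 1/ε − (N+1)/N, D̃ = 1/ε − (N+1−α)/N, Z_n = (2n−1)/(2N) + 1/ε, Z_{n+1/2} = n/N + 1/ε, Γ² = 4c/(Nε) and Δ = 2/ε, one has X_n + Y_n = x_n + y_n for every ε > 0, and the limits (Y_n−Ã)(Y_n−B̃)(Y_n−C̃)(Y_n−D̃)/((Y_n−Z_n)² − Γ²) → −y_n(N+1+N y_n)(N+1−α+N y_n)/(cN) and, provided N x_n ≠ n, (X_n+Ã)(X_n+B̃)(X_n+C̃)(X_n+D̃)/((X_n−Z_{n+1/2})² − Δ²) → x_n(−N−1+N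 x_n)(α−N−1+N x_n)/(N(N x_n − n)) as ε → 0⁺. -/
open Filter Topology

/-! After clearing the common factors, each ratio is a product of factors with finite limits
and a single quotient `(a + p/ε) / (b + q/ε)`, which tends to `p/q`: in the `Y`-ratio the
`B̃`-factor and the `Γ²`-term carry the `1/ε`, in the `X`-ratio the `B̃`-factor and
`(Xₙ - Z_{n+1/2})² - Δ² = d² - 4d/ε` with `d = xₙ - n/N`. -/

theorem tendsto_add_div_div_add_div (a b p q : ℝ) (hq : q ≠ 0) :
    Tendsto (fun ε : ℝ => (a + p / ε) / (b + q / ε)) (𝓝[≠] 0) (𝓝 (p / q)) := by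
  have hcont : ContinuousAt (fun ε : ℝ => (a * ε + p) / (b * ε + q)) 0 :=
    ContinuousAt.div (by fun_prop) (by fun_prop) (by simpa using hq)
  have hlim : Tendsto (fun ε : ℝ => (a * ε + p) / (b * ε + q)) (𝓝 0) (𝓝 (p / q)) := by
    simpa using hcont.tendsto
  refine (hlim.mono_left nhdsWithin_le_nhds).congr' ?_
  filter_upwards [self_mem_nhdsWithin] with ε (hε : ε ≠ 0)
  rw [← mul_div_mul_right (a + p / ε) _ hε, add_mul, add_mul, div_mul_cancel₀ _ hε,
    div_mul_cancel₀ _ hε]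

/-- Degeneration of the α-dP_IV data to the generalized Krawtchouk system as
`ε → 0⁺`, with `Xₙ = xₙ - 1/ε`, `Yₙ = yₙ + 1/ε`, `Ã = 1/ε`,
`B̃ = -3/ε + (2N+2-α)/N`, `C̃ = 1/ε - (N+1)/N`, `D̃ = 1/ε - (N+1-α)/N`,
`Zₙ = (2n-1)/(2N) + 1/ε`, `Z_{n+1/2} = n/N + 1/ε`, `Γ² = 4c/(Nε)`, `Δ = 2/ε`. -/
theorem alpha_dPIV_degeneration
    (N : ℕ) (hN : 1 ≤ N) (n : ℕ) (α c : ℝ) (hc : 0 < c) (xn yn : ℝ) :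
    (∀ ε : ℝ, 0 < ε → (xn - 1 / ε) + (yn + 1 / ε) = xn + yn) ∧
    Filter.Tendsto (fun ε : ℝ =>
      ((yn + 1 / ε - 1 / ε)
        * (yn + 1 / ε - (-3 / ε + (2 * (N : ℝ) + 2 - α) / N))
        * (yn + 1 / ε - (1 / ε - ((N : ℝ) + 1) / N))
        * (yn + 1 / ε - (1 / ε - ((N : ℝ) + 1 - α) / N)))
      / ((yn + 1 / ε - ((2 * (n : ℝ) - 1) / (2 * N) + 1 / ε)) ^ 2
          - 4 * c / ((N : ℝ) * ε)))
      (nhdsWithin 0 (Set.Ioi 0))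
      (nhds (-(yn * ((N : ℝ) + 1 + (N : ℝ) * yn) * ((N : ℝ) + 1 - α + (N : ℝ) * yn))
        / (c * N))) ∧
    ((N : ℝ) * xn ≠ (n : ℝ) →
      Filter.Tendsto (fun ε : ℝ =>
        ((xn - 1 / ε + 1 / ε)
          * (xn - 1 / ε + (-3 / ε + (2 * (N : ℝ) + 2 - α) / N))
          * (xn - 1 / ε + (1 / ε - ((N : ℝ) + 1) / N))
          * (xn - 1 / ε + (1 / ε - ((N : ℝ) + 1 - α) / N)))
        / ((xn - 1 / ε - ((n : ℝ) / N + 1 / ε)) ^ 2 - (2 / ε) ^ 2))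
        (nhdsWithin 0 (Set.Ioi 0))
        (nhds (xn * (-(N : ℝ) - 1 + (N : ℝ) * xn) * (α - (N : ℝ) - 1 + (N : ℝ) * xn)
          / ((N : ℝ) * ((N : ℝ) * xn - (n : ℝ)))))) := by
  have hN0 : (N : ℝ) ≠ 0 := Nat.cast_ne_zero.mpr (by omega)
  refine ⟨fun ε _ => by ring, ?_, fun hx => ?_⟩
  · have hq : -(4 * c / N) ≠ 0 := neg_ne_zero.mpr (div_ne_zero (by positivity) hN0)
    have hY := ((tendsto_add_div_div_add_div (yn - (2 * N + 2 - α) / N)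
      ((yn - (2 * n - 1) / (2 * N)) ^ 2) 4 _ hq).mono_left (nhdsGT_le_nhdsNE 0)).const_mul
        (yn * (yn + (N + 1) / N) * (yn + (N + 1 - α) / N))
    convert hY using 2
    · ring
    · field_simp
      ring
  · have hd : xn - n / N ≠ 0 := by
      rwa [sub_ne_zero, ne_eq, eq_div_iff hN0, mul_comm]
    have hX := ((tendsto_add_div_div_add_div (xn + (2 * N + 2 - α) / N)
      ((xn - n / N) ^ 2) (-4) (-4 * (xn - n / N)) (mul_ne_zero (by norm_num) hd)).mono_left
        (nhdsGT_le_nhdsNE 0)).const_mul (xn * (xn - (N + 1) / N) * (xn - (N + 1 - α) / N))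
    convert hX using 2
    · ring
    · field_simp
      ring
end

section
/- Let y : (0,∞) → ℝ be twice differentiable with y(c) ∉ {0,1} for all c > 0 and suppose y solves the fifth Painlevé equation y'' = (1/(2y) + 1/(y−1))(y')² − y'/c + ((y−1)²/c²)(A·y + B/y) + C·y/c + D·y(y+1)/(y−1) with parameters A = (α−N−1)²/2, B = −(n−N)²/2, C = −(n+α), D = −1/2. Define y_n(c) = [N − n + y·(1 + n + c − α + (α−N−1)y) − c·y'] / (2N(y−1)y) and x_n(c) = [(c·y' + n − N)² − 2(n−N)(n−N+c·y')·y − A_1·y⁴ + A_2·y³ − A_3·y²] / (4cN(y−1)y²), where A_1 = (1+N−α)², A_2 = 2(1+N−α)(1+c+N−α) and A_3 = (1+c+n−α)(1+c−n+2N−α). Then at every c > 0 with x_n(c) + y_n(c) ≠ 0 one has y_n'(c) = x_n + y_n + y_n(N+1+N y_n)(N+1−α+N y_n)/(cN(x_n + y_n)). -/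
/-!
`yₙ` is the quotient `p / q` of `p = N - n + y (1 + n + c - α + (α - N - 1) y) - c y'` and
`q = 2N (y - 1) y`, so the quotient rule expresses `yₙ'` through `c, y, y', y''`. Eliminating `y''`
with the Painlevé V equation leaves a rational identity in `c, y, y'`, which is checked by clearing
denominators.
-/

noncomputable def painleveVRhs (A B C D c y y' : ℝ) : ℝ :=
  (1 / (2 * y) + 1 / (y - 1)) * y' ^ 2 - y' / c
    + ((y - 1) ^ 2 / c ^ 2) * (A * y + B / y) + C * y / c + D * y * (y + 1) / (y - 1)

section Quantities

variable (N n α : ℝ)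

def ynNum (c y y' : ℝ) : ℝ :=
  N - n + y * (1 + n + c - α + (α - N - 1) * y) - c * y'

def ynDen (y : ℝ) : ℝ := 2 * N * (y - 1) * y

noncomputable def xnOf (c y y' : ℝ) : ℝ :=
  ((c * y' + n - N) ^ 2 - 2 * (n - N) * (n - N + c * y') * y
    - (1 + N - α) ^ 2 * y ^ 4 + 2 * (1 + N - α) * (1 + c + N - α) * y ^ 3
    - (1 + c + n - α) * (1 + c - n + 2 * N - α) * y ^ 2)
  / (4 * c * N * (y - 1) * y ^ 2)

theorem hasDerivAt_ynNum {y y' : ℝ → ℝ} {c dy ddy : ℝ}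
    (hy : HasDerivAt y dy c) (hy' : HasDerivAt y' ddy c) :
    HasDerivAt (fun t => ynNum N n α t (y t) (y' t))
      (dy * (1 + n + c - α + 2 * (α - N - 1) * y c) + y c - y' c - c * ddy) c := by
  have hlin : HasDerivAt (fun t => 1 + n + t - α + (α - N - 1) * y t)
      (1 + (α - N - 1) * dy) c :=
    (((hasDerivAt_id' c).const_add (1 + n)).sub_const α).add (hy.const_mul _)
  exact (((hy.mul hlin).const_add (N - n)).sub ((hasDerivAt_id' c).mul hy')).congr_deriv
    (by ring)

theorem hasDerivAt_ynDen {y : ℝ → ℝ} {c dy : ℝ} (hy : HasDerivAt y dy c) :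
    HasDerivAt (fun t => ynDen N (y t)) (2 * N * (2 * y c - 1) * dy) c :=
  (((hy.sub_const 1).const_mul (2 * N)).mul hy).congr_deriv (by ring)

/-- The quotient rule for `ynNum / ynDen`, with `y''` eliminated by the Painlevé V equation. -/
theorem deriv_ynNum_div_ynDen_of_painleveV {c y y' yn X : ℝ} (hc : c ≠ 0) (hN : N ≠ 0)
    (hy0 : y ≠ 0) (hy1 : y - 1 ≠ 0) (hyn : yn = ynNum N n α c y y' / ynDen N y)
    (hXdef : X = xnOf N n α c y y' + yn) (hX : X ≠ 0) :
    ((y' * (1 + n + c - α + 2 * (α - N - 1) * y) + y - y'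
        - c * painleveVRhs ((α - N - 1) ^ 2 / 2) (-((n - N) ^ 2 / 2)) (-(n + α)) (-(1 / 2)) c y y')
        * ynDen N y - ynNum N n α c y y' * (2 * N * (2 * y - 1) * y')) / ynDen N y ^ 2
      = X + yn * (N + 1 + N * yn) * (N + 1 - α + N * yn) / (c * N * X) := by
  rw [← sub_eq_iff_eq_add', eq_div_iff (mul_ne_zero (mul_ne_zero hc hN) hX)]
  subst hXdef hyn
  simp only [xnOf, ynNum, ynDen, painleveVRhs]
  field_simp
  ring

end Quantities

theorem painleveV_gives_yn_derivative_general
    (N n : ℕ) (hN : 1 ≤ N) (α : ℝ)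
    (y y' y'' : ℝ → ℝ)
    (hy1 : ∀ c : ℝ, 0 < c → HasDerivAt y (y' c) c)
    (hy2 : ∀ c : ℝ, 0 < c → HasDerivAt y' (y'' c) c)
    (hy0 : ∀ c : ℝ, 0 < c → y c ≠ 0)
    (hyone : ∀ c : ℝ, 0 < c → y c ≠ 1)
    (hP5 : ∀ c : ℝ, 0 < c →
      y'' c = (1 / (2 * y c) + 1 / (y c - 1)) * (y' c) ^ 2 - y' c / c
        + ((y c - 1) ^ 2 / c ^ 2)
            * (((α - (N : ℝ) - 1) ^ 2 / 2) * y c + (-(((n : ℝ) - (N : ℝ)) ^ 2 / 2)) / y c)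
        + (-((n : ℝ) + α)) * y c / c
        + (-(1 / 2 : ℝ)) * y c * (y c + 1) / (y c - 1))
    (xn yn : ℝ → ℝ)
    (hyn : ∀ c : ℝ, yn c =
      ((N : ℝ) - (n : ℝ)
        + y c * (1 + (n : ℝ) + c - α + (α - (N : ℝ) - 1) * y c) - c * y' c)
      / (2 * (N : ℝ) * (y c - 1) * y c))
    (hxn : ∀ c : ℝ, xn c =
      ((c * y' c + (n : ℝ) - (N : ℝ)) ^ 2
        - 2 * ((n : ℝ) - (N : ℝ)) * ((n : ℝ) - (N : ℝ) + c * y' c) * y c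
        - (1 + (N : ℝ) - α) ^ 2 * (y c) ^ 4
        + 2 * (1 + (N : ℝ) - α) * (1 + c + (N : ℝ) - α) * (y c) ^ 3
        - (1 + c + (n : ℝ) - α) * (1 + c - (n : ℝ) + 2 * (N : ℝ) - α) * (y c) ^ 2)
      / (4 * c * (N : ℝ) * (y c - 1) * (y c) ^ 2)) :
    ∀ c : ℝ, 0 < c → xn c + yn c ≠ 0 →
      HasDerivAt yn
        (xn c + yn c
          + yn c * ((N : ℝ) + 1 + (N : ℝ) * yn c) * ((N : ℝ) + 1 - α + (N : ℝ) * yn c)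
            / (c * (N : ℝ) * (xn c + yn c))) c := by
  intro c hc hX
  have hN0 : (N : ℝ) ≠ 0 := Nat.cast_ne_zero.mpr (by omega)
  have hyc : y c - 1 ≠ 0 := sub_ne_zero.mpr (hyone c hc)
  have hden : ynDen N (y c) ≠ 0 := mul_ne_zero (mul_ne_zero (by positivity) hyc) (hy0 c hc)
  have hquot := ((hasDerivAt_ynNum N n α (hy1 c hc) (hy2 c hc)).div
    (hasDerivAt_ynDen N (hy1 c hc)) hden).congr_of_eventuallyEq (.of_forall hyn)
  refine hquot.congr_deriv ?_
  rw [hP5 c hc]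
  exact deriv_ynNum_div_ynDen_of_painleveV N n α hc.ne' hN0 (hy0 c hc) hyc (hyn c)
    (by rw [hxn c]; rfl) hX

/-- If `y` solves the fifth Painlevé equation with parameters
`A = (α-N-1)²/2`, `B = -(n-N)²/2`, `C = -(n+α)`, `D = -1/2`, then the
quantities `xₙ(c)` and `yₙ(c)` built from `y` satisfy
`yₙ' = xₙ + yₙ + yₙ(N+1+Nyₙ)(N+1-α+Nyₙ)/(cN(xₙ+yₙ))`. -/
theorem painleveV_gives_yn_derivative
    (N n : ℕ) (hN : 1 ≤ N) (hn : n ≤ N) (α : ℝ) (hα : α < 1)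
    (y y' y'' : ℝ → ℝ)
    (hy1 : ∀ c : ℝ, 0 < c → HasDerivAt y (y' c) c)
    (hy2 : ∀ c : ℝ, 0 < c → HasDerivAt y' (y'' c) c)
    (hy0 : ∀ c : ℝ, 0 < c → y c ≠ 0)
    (hyone : ∀ c : ℝ, 0 < c → y c ≠ 1)
    (hP5 : ∀ c : ℝ, 0 < c →
      y'' c = (1 / (2 * y c) + 1 / (y c - 1)) * (y' c) ^ 2 - y' c / c
        + ((y c - 1) ^ 2 / c ^ 2)
            * (((α - (N : ℝ) - 1) ^ 2 / 2) * y c + (-(((n : ℝ) - (N : ℝ)) ^ 2 / 2)) / y c)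
        + (-((n : ℝ) + α)) * y c / c
        + (-(1 / 2 : ℝ)) * y c * (y c + 1) / (y c - 1))
    (xn yn : ℝ → ℝ)
    (hyn : ∀ c : ℝ, yn c =
      ((N : ℝ) - (n : ℝ)
        + y c * (1 + (n : ℝ) + c - α + (α - (N : ℝ) - 1) * y c) - c * y' c)
      / (2 * (N : ℝ) * (y c - 1) * y c))
    (hxn : ∀ c : ℝ, xn c =
      ((c * y' c + (n : ℝ) - (N : ℝ)) ^ 2
        - 2 * ((n : ℝ) - (N : ℝ)) * ((n : ℝ) - (N : ℝ) + c * y' c) * y c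
        - (1 + (N : ℝ) - α) ^ 2 * (y c) ^ 4
        + 2 * (1 + (N : ℝ) - α) * (1 + c + (N : ℝ) - α) * (y c) ^ 3
        - (1 + c + (n : ℝ) - α) * (1 + c - (n : ℝ) + 2 * (N : ℝ) - α) * (y c) ^ 2)
      / (4 * c * (N : ℝ) * (y c - 1) * (y c) ^ 2)) :
    ∀ c : ℝ, 0 < c → xn c + yn c ≠ 0 →
      HasDerivAt yn
        (xn c + yn c
          + yn c * ((N : ℝ) + 1 + (N : ℝ) * yn c) * ((N : ℝ) + 1 - α + (N : ℝ) * yn c)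
            / (c * (N : ℝ) * (xn c + yn c))) c :=
  painleveV_gives_yn_derivative_general N n hN α y y' y'' hy1 hy2 hy0 hyone hP5 xn yn hyn hxn
end

section
/- Suppose that for every c > 0 the functions satisfy the Toda equations d/dc(a_n²) = (a_n²/c)(b_n − b_{n−1}) and d/dc(b_n) = (a_{n+1}² − a_n²)/c, and the discrete system cN·(x_n + y_n)(x_{n+1} + y_n) = −y_n(N+1+N y_n)(N+1−α+N y_n) and N(N x_n − n)·(x_n + y_n)(x_n + y_{n−1}) = x_n(−N−1+N x_n)(α−N−1+N x_n). Then at every c > 0 with x_n(c) + y_n(c) ≠ 0 and N x_n(c) ≠ n one has x_n' = ((N x_n − n)/c)·(−x_n − y_n + x_n(−N−1+N x_n)(α−N−1+N x_n)/(N(N x_n − n)(x_n + y_n))) and y_n' = x_n + y_n + y_n(N+1+N y_n)(N+1−α+N y_n)/(cN(x_n + y_n)). -/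
/-!
In the variables `x, y` the Toda equations become `xₙ' = (N xₙ - n)/c · (yₙ₋₁ - yₙ)` and
`yₙ' = xₙ - xₙ₊₁`. The two discrete equations solve for `xₙ + yₙ₋₁` and `xₙ₊₁ + yₙ` as
rational functions of `xₙ, yₙ`, and substituting these gives the claimed derivatives.
-/

theorem hasDerivAt_div_id_of_hasDerivAt_mul {f : ℝ → ℝ} {β c : ℝ} (hc : c ≠ 0)
    (hf : HasDerivAt f (f c / c * β) c) :
    HasDerivAt (fun t => f t / t) (f c / c * (β - 1) / c) c := by
  refine (hf.div (hasDerivAt_id' c) hc).congr_deriv ?_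
  field_simp

section TodaCoordinates

variable {N k α c : ℝ} {a a₁ b bm x x₁ y ym : ℝ → ℝ}

theorem toda_hasDerivAt_x (hN : N ≠ 0) (hc : c ≠ 0)
    (hx : ∀ t, x t = (a t / t + k) / N)
    (hy : y c = -(b c + N + 1 + c - k - α) / N)
    (hym : ym c = -(bm c + N + 1 + c - (k - 1) - α) / N)
    (ha : HasDerivAt a (a c / c * (b c - bm c)) c) :
    HasDerivAt x ((N * x c - k) / c * (ym c - y c)) c := by
  obtain rfl : x = fun t => (a t / t + k) / N := funext hx
  refine (((hasDerivAt_div_id_of_hasDerivAt_mul hc ha).add_const k).div_const N).congr_deriv ?_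
  rw [hy, hym]
  field_simp
  ring

theorem toda_hasDerivAt_y (hN : N ≠ 0) (hc : c ≠ 0)
    (hx : x c = (a c / c + k) / N)
    (hx₁ : x₁ c = (a₁ c / c + (k + 1)) / N)
    (hy : ∀ t, y t = -(b t + N + 1 + t - k - α) / N)
    (hb : HasDerivAt b ((a₁ c - a c) / c) c) :
    HasDerivAt y (x c - x₁ c) c := by
  obtain rfl : y = fun t => -(b t + N + 1 + t - k - α) / N := funext hy
  refine ((((((hb.add_const N).add_const 1).add (hasDerivAt_id c)).sub_const k).sub_const
    α).neg.div_const N).congr_deriv ?_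
  rw [hx, hx₁]
  field_simp
  ring

end TodaCoordinates

theorem toda_and_discrete_give_derivatives_general
    (N n : ℕ) (hn2 : n + 1 ≤ N) (α : ℝ)
    (an2 an12 bnm1 bn : ℝ → ℝ)
    (xn xn1 ynm1 yn : ℝ → ℝ)
    (hxn : ∀ c : ℝ, xn c = (an2 c / c + (n : ℝ)) / N)
    (hxn1 : ∀ c : ℝ, xn1 c = (an12 c / c + ((n : ℝ) + 1)) / N)
    (hyn : ∀ c : ℝ, yn c = -(bn c + (N : ℝ) + 1 + c - (n : ℝ) - α) / N)
    (hynm1 : ∀ c : ℝ,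
      ynm1 c = -(bnm1 c + (N : ℝ) + 1 + c - ((n : ℝ) - 1) - α) / N)
    (hToda1 : ∀ c : ℝ, 0 < c → HasDerivAt an2 (an2 c / c * (bn c - bnm1 c)) c)
    (hToda2 : ∀ c : ℝ, 0 < c → HasDerivAt bn ((an12 c - an2 c) / c) c)
    (hsys1 : ∀ c : ℝ, 0 < c →
      c * (N : ℝ) * ((xn c + yn c) * (xn1 c + yn c))
        = -(yn c * ((N : ℝ) + 1 + (N : ℝ) * yn c) * ((N : ℝ) + 1 - α + (N : ℝ) * yn c)))
    (hsys2 : ∀ c : ℝ, 0 < c →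
      (N : ℝ) * ((N : ℝ) * xn c - (n : ℝ)) * ((xn c + yn c) * (xn c + ynm1 c))
        = xn c * (-(N : ℝ) - 1 + (N : ℝ) * xn c) * (α - (N : ℝ) - 1 + (N : ℝ) * xn c)) :
    ∀ c : ℝ, 0 < c → xn c + yn c ≠ 0 → (N : ℝ) * xn c ≠ (n : ℝ) →
      HasDerivAt xn
        ((((N : ℝ) * xn c - (n : ℝ)) / c)
          * (-(xn c) - yn c
            + xn c * (-(N : ℝ) - 1 + (N : ℝ) * xn c) * (α - (N : ℝ) - 1 + (N : ℝ) * xn c)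
              / ((N : ℝ) * (((N : ℝ) * xn c - (n : ℝ)) * (xn c + yn c))))) c ∧
      HasDerivAt yn
        (xn c + yn c
          + yn c * ((N : ℝ) + 1 + (N : ℝ) * yn c) * ((N : ℝ) + 1 - α + (N : ℝ) * yn c)
            / (c * (N : ℝ) * (xn c + yn c))) c := by
  intro c hc hxy hNx
  have hN : (N : ℝ) ≠ 0 := Nat.cast_ne_zero.mpr (by omega)
  have hx_ym : xn c + ynm1 c
      = xn c * (-(N : ℝ) - 1 + N * xn c) * (α - N - 1 + N * xn c)
        / (N * ((N * xn c - n) * (xn c + yn c))) :=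
    eq_div_of_mul_eq (mul_ne_zero hN (mul_ne_zero (sub_ne_zero.mpr hNx) hxy))
      (by linear_combination hsys2 c hc)
  have hx₁_y : xn1 c + yn c
      = -(yn c * ((N : ℝ) + 1 + N * yn c) * (N + 1 - α + N * yn c)) / (c * N * (xn c + yn c)) :=
    eq_div_of_mul_eq (mul_ne_zero (mul_ne_zero hc.ne' hN) hxy)
      (by linear_combination hsys1 c hc)
  refine ⟨(toda_hasDerivAt_x hN hc.ne' hxn (hyn c) (hynm1 c) (hToda1 c hc)).congr_deriv ?_,
    (toda_hasDerivAt_y hN hc.ne' (hxn c) (hxn1 c) hyn (hToda2 c hc)).congr_deriv ?_⟩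
  · linear_combination ((N : ℝ) * xn c - n) / c * hx_ym
  · linear_combination -hx₁_y

/-- The Toda system together with the discrete system gives the differential
equations for `xₙ(c)` and `yₙ(c)`. -/
theorem toda_and_discrete_give_derivatives
    (N n : ℕ) (hn1 : 1 ≤ n) (hn2 : n + 1 ≤ N) (α : ℝ)
    (an2 an12 bnm1 bn : ℝ → ℝ)
    (xn xn1 ynm1 yn : ℝ → ℝ)
    (hxn : ∀ c : ℝ, xn c = (an2 c / c + (n : ℝ)) / N)
    (hxn1 : ∀ c : ℝ, xn1 c = (an12 c / c + ((n : ℝ) + 1)) / N)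
    (hyn : ∀ c : ℝ, yn c = -(bn c + (N : ℝ) + 1 + c - (n : ℝ) - α) / N)
    (hynm1 : ∀ c : ℝ,
      ynm1 c = -(bnm1 c + (N : ℝ) + 1 + c - ((n : ℝ) - 1) - α) / N)
    (hToda1 : ∀ c : ℝ, 0 < c → HasDerivAt an2 (an2 c / c * (bn c - bnm1 c)) c)
    (hToda2 : ∀ c : ℝ, 0 < c → HasDerivAt bn ((an12 c - an2 c) / c) c)
    (hsys1 : ∀ c : ℝ, 0 < c →
      c * (N : ℝ) * ((xn c + yn c) * (xn1 c + yn c))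
        = -(yn c * ((N : ℝ) + 1 + (N : ℝ) * yn c) * ((N : ℝ) + 1 - α + (N : ℝ) * yn c)))
    (hsys2 : ∀ c : ℝ, 0 < c →
      (N : ℝ) * ((N : ℝ) * xn c - (n : ℝ)) * ((xn c + yn c) * (xn c + ynm1 c))
        = xn c * (-(N : ℝ) - 1 + (N : ℝ) * xn c) * (α - (N : ℝ) - 1 + (N : ℝ) * xn c)) :
    ∀ c : ℝ, 0 < c → xn c + yn c ≠ 0 → (N : ℝ) * xn c ≠ (n : ℝ) →
      HasDerivAt xn
        ((((N : ℝ) * xn c - (n : ℝ)) / c)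
          * (-(xn c) - yn c
            + xn c * (-(N : ℝ) - 1 + (N : ℝ) * xn c) * (α - (N : ℝ) - 1 + (N : ℝ) * xn c)
              / ((N : ℝ) * (((N : ℝ) * xn c - (n : ℝ)) * (xn c + yn c))))) c ∧
      HasDerivAt yn
        (xn c + yn c
          + yn c * ((N : ℝ) + 1 + (N : ℝ) * yn c) * ((N : ℝ) + 1 - α + (N : ℝ) * yn c)
            / (c * (N : ℝ) * (xn c + yn c))) c :=
  toda_and_discrete_give_derivatives_general N n hn2 α an2 an12 bnm1 bn xn xn1 ynm1 yn hxn hxn1 hyn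
    hynm1 hToda1 hToda2 hsys1 hsys2
end
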